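/- arXiv:2112.13590 — 7 statements merged into one kernel-verified Lean document; each statement's English description precedes it below -/
import Mathlib

section
/- Let K and C be convex bodies in ℝ^n each containing 0 in its interior. Then K ∩ C ⊆ ((K° + C°)/2)° ⊆ (K + C)/2 ⊆ conv(K ∪ C). Moreover, equality holds between any two consecutive sets of this chain if and only if K = C. -/
open Pointwise RealInnerProductSpace

variable {E : Type*} [NormedAddCommGroup E] [InnerProductSpace ℝ E]

/-- `K` is optimally contained in `C`: `K ⊆ C` and there is no `ρ ∈ [0,1)` and
translation `t` with `K ⊆ ρ • C + {t}`. -/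
def OptCont (K C : Set E) : Prop :=
  K ⊆ C ∧ ¬∃ ρ : ℝ, 0 ≤ ρ ∧ ρ < 1 ∧ ∃ t : E, K ⊆ ρ • C + {t}

/-- The polar set `C° = {a | ∀ x ∈ C, ⟪a,x⟫ ≤ 1}`. -/
def polarSet (C : Set E) : Set E := {a : E | ∀ x ∈ C, ⟪a, x⟫ ≤ 1}

/-- The Minkowski asymmetry of `C`. -/
noncomputable def minkAsym (C : Set E) : ℝ :=
  sInf {ρ : ℝ | 0 < ρ ∧ ∃ c : E, C - {c} ⊆ ρ • ({c} - C)}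

/-- `C` is Minkowski centered if `C ⊆ s(C) • (-C)`. -/
def MinkCentered (C : Set E) : Prop := C ⊆ minkAsym C • (-C)

/-! ### Auxiliary lemmas -/

lemma polarSet_antitone {S T : Set E} (h : S ⊆ T) : polarSet T ⊆ polarSet S :=
  fun _ ha x hx => ha x (h hx)

lemma zero_mem_polarSet (S : Set E) : (0 : E) ∈ polarSet S := by
  intro x _; simp

lemma convex_polarSet (S : Set E) : Convex ℝ (polarSet S) := by
  intro u hu v hv a b ha hb hab x hx
  have h1 := hu x hx
  have h2 := hv x hx
  rw [inner_add_left, real_inner_smul_left, real_inner_smul_left]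
  nlinarith

lemma isClosed_polarSet (S : Set E) : IsClosed (polarSet S) := by
  have : polarSet S = ⋂ x ∈ S, {a : E | ⟪a, x⟫ ≤ 1} := by
    ext a; simp [polarSet]
  rw [this]
  exact isClosed_biInter fun x _ =>
    isClosed_le (Continuous.inner continuous_id continuous_const) continuous_const

lemma subset_bipolar (S : Set E) : S ⊆ polarSet (polarSet S) := by
  intro x hx a ha
  rw [real_inner_comm]
  exact ha x hx

/-- Separation of a point from a closed convex set, inner product form. -/
lemma sep_point [CompleteSpace E] {S : Set E} (hcl : IsClosed S) (hconv : Convex ℝ S)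
    {x : E} (hx : x ∉ S) :
    ∃ a : E, ∃ s : ℝ, (∀ y ∈ S, ⟪a, y⟫ < s) ∧ s < ⟪a, x⟫ := by
  obtain ⟨f, s, h1, h2⟩ := geometric_hahn_banach_closed_point hconv hcl hx
  refine ⟨(InnerProductSpace.toDual ℝ E).symm f, s, fun y hy => ?_, ?_⟩
  · rw [InnerProductSpace.toDual_symm_apply]; exact h1 y hy
  · rw [InnerProductSpace.toDual_symm_apply]; exact h2

/-- Bipolar theorem for closed convex sets containing the origin. -/
lemma bipolar_eq [CompleteSpace E] {S : Set E} (hcl : IsClosed S) (hconv : Convex ℝ S)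
    (h0 : (0 : E) ∈ S) : polarSet (polarSet S) = S := by
  apply Set.Subset.antisymm _ (subset_bipolar S)
  intro x hx
  by_contra hxS
  obtain ⟨a, s, h1, h2⟩ := sep_point hcl hconv hxS
  have hs : 0 < s := by have := h1 0 h0; simpa using this
  have ha : s⁻¹ • a ∈ polarSet S := by
    intro y hy
    rw [real_inner_smul_left]
    calc s⁻¹ * ⟪a, y⟫ ≤ s⁻¹ * s :=
          mul_le_mul_of_nonneg_left (h1 y hy).le (inv_nonneg.mpr hs.le)
      _ = 1 := inv_mul_cancel₀ hs.ne'
  have h3 := hx (s⁻¹ • a) ha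
  rw [real_inner_smul_right, real_inner_comm] at h3
  -- h3 : s⁻¹ * ⟪a, x⟫ ≤ 1
  have h4 := mul_le_mul_of_nonneg_left h3 hs.le
  rw [← mul_assoc, mul_inv_cancel₀ hs.ne', one_mul, mul_one] at h4
  linarith

lemma exists_max_inner {K : Set E} (hK : IsCompact K) (hne : K.Nonempty) (a : E) :
    ∃ k ∈ K, ∀ y ∈ K, ⟪a, y⟫ ≤ ⟪a, k⟫ := by
  obtain ⟨k, hk, hmax⟩ := hK.exists_isMaxOn hne
    ((continuous_const.inner continuous_id).continuousOn :
      ContinuousOn (fun y : E => ⟪a, y⟫) K)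
  exact ⟨k, hk, fun y hy => hmax hy⟩

/-- If `0` is interior to `K` and `a ≠ 0`, some point of `K` has positive inner product. -/
lemma exists_pos_inner {K : Set E} (h0 : 0 ∈ interior K) {a : E} (ha : a ≠ 0) :
    ∃ p ∈ K, 0 < ⟪a, p⟫ := by
  obtain ⟨ε, hε, hball⟩ := Metric.mem_nhds_iff.mp (mem_interior_iff_mem_nhds.mp h0)
  have hna : 0 < ‖a‖ := norm_pos_iff.mpr ha
  refine ⟨(ε / 2 * ‖a‖⁻¹) • a, ?_, ?_⟩
  · apply hball
    rw [Metric.mem_ball, dist_zero_right, norm_smul]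
    have h5 : ‖ε / 2 * ‖a‖⁻¹‖ = ε / 2 * ‖a‖⁻¹ := by
      rw [Real.norm_eq_abs, abs_of_nonneg]; positivity
    rw [h5, mul_assoc, inv_mul_cancel₀ hna.ne', mul_one]
    linarith
  · rw [real_inner_smul_right, real_inner_self_eq_norm_sq]
    have h6 : (0:ℝ) < ε / 2 * ‖a‖⁻¹ := by positivity
    exact mul_pos h6 (pow_pos hna 2)

/-- Minkowski-type cancellation. -/
lemma cancel_lemma [CompleteSpace E] {K C : Set E} (hK : IsCompact K) (hCcl : IsClosed C)
    (hCconv : Convex ℝ C) (h : ∀ x ∈ K, x + x ∈ K + C) : K ⊆ C := by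
  intro x hx
  by_contra hxC
  obtain ⟨a, s, h1, h2⟩ := sep_point hCcl hCconv hxC
  obtain ⟨k, hk, hmax⟩ := exists_max_inner hK ⟨x, hx⟩ a
  have hks : s < ⟪a, k⟫ := lt_of_lt_of_le h2 (hmax x hx)
  obtain ⟨k', hk', c, hc, hkc⟩ := Set.mem_add.mp (h k hk)
  have e1 : ⟪a, k'⟫ + ⟪a, c⟫ = ⟪a, k⟫ + ⟪a, k⟫ := by
    rw [← inner_add_right, ← inner_add_right, hkc]
  have := hmax k' hk'
  have := h1 c hc
  linarith

/-- The polar of a set with `0` interior is compact (in finite dimension). -/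
lemma polar_isCompact [FiniteDimensional ℝ E] {K : Set E} (h0 : 0 ∈ interior K) :
    IsCompact (polarSet K) := by
  obtain ⟨ε, hε, hball⟩ := Metric.mem_nhds_iff.mp (mem_interior_iff_mem_nhds.mp h0)
  apply Metric.isCompact_of_isClosed_isBounded (isClosed_polarSet K)
  apply (Metric.isBounded_closedBall (x := (0:E)) (r := 2 / ε)).subset
  intro a ha
  rw [Metric.mem_closedBall, dist_zero_right]
  rcases eq_or_ne a 0 with rfl | hne
  · simp; positivity
  · have hna : 0 < ‖a‖ := norm_pos_iff.mpr hne
    have hmem : (ε / 2 * ‖a‖⁻¹) • a ∈ K := by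
      apply hball
      rw [Metric.mem_ball, dist_zero_right, norm_smul]
      have h5 : ‖ε / 2 * ‖a‖⁻¹‖ = ε / 2 * ‖a‖⁻¹ := by
        rw [Real.norm_eq_abs, abs_of_nonneg]; positivity
      rw [h5, mul_assoc, inv_mul_cancel₀ hna.ne', mul_one]
      linarith
    have h7 := ha _ hmem
    rw [real_inner_smul_right, real_inner_self_eq_norm_sq] at h7
    have h8 : ε / 2 * ‖a‖⁻¹ * ‖a‖ ^ 2 = ε / 2 * ‖a‖ := by
      rw [pow_two, ← mul_assoc, mul_assoc (ε / 2), inv_mul_cancel₀ hna.ne', mul_one]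
    rw [h8] at h7
    rw [le_div_iff₀ hε]
    nlinarith

lemma halfSumSelf {S : Set E} (h : Convex ℝ S) : (2:ℝ)⁻¹ • (S + S) = S := by
  ext x
  constructor
  · rintro ⟨y, hy, rfl⟩
    obtain ⟨u, hu, v, hv, rfl⟩ := Set.mem_add.mp hy
    show (2:ℝ)⁻¹ • (u + v) ∈ S
    rw [smul_add]
    exact h hu hv (by norm_num) (by norm_num) (by norm_num)
  · intro hx
    exact ⟨x + x, Set.add_mem_add hx hx, by
      show (2:ℝ)⁻¹ • (x + x) = x
      rw [smul_add, ← add_smul]; norm_num⟩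

lemma mem_half_double {S : Set E} {x : E} (h : x ∈ (2:ℝ)⁻¹ • S) : x + x ∈ S := by
  obtain ⟨y, hy, hxy⟩ := h
  have hxy' : (2:ℝ)⁻¹ • y = x := hxy
  have : x + x = y := by
    rw [← hxy', ← add_smul]
    norm_num
  rwa [this]

lemma half_double_mem {S : Set E} {x : E} (h : x + x ∈ S) : x ∈ (2:ℝ)⁻¹ • S :=
  ⟨x + x, h, by
    show (2:ℝ)⁻¹ • (x + x) = x
    rw [smul_add, ← add_smul]; norm_num⟩

/-- Purely real computation for inclusion 2. -/
lemma real_key1 (α β X : ℝ) (hα : 0 < α) (hβ : 0 < β) (hX : α + β < X + X)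
    (hle : (2:ℝ)⁻¹ * ((α⁻¹ + β⁻¹) * X) ≤ 1) : False := by
  have e : (2:ℝ)⁻¹ * ((α⁻¹ + β⁻¹) * X) = (α + β) * X / (2 * (α * β)) := by
    field_simp
    ring_nf
    try exact Or.inl trivial
  rw [e, div_le_one (by positivity)] at hle
  have h9 : (α + β) * (α + β) < (α + β) * (X + X) :=
    mul_lt_mul_of_pos_left hX (by positivity)
  nlinarith [sq_nonneg (α - β)]

/-- Purely real computation for the second equality. -/
lemma real_key2 (β A : ℝ) (hβ : 0 < β) (hA : β < A)
    (hle : (2:ℝ)⁻¹ * (2⁻¹ * (((β⁻¹ * A)⁻¹ * β⁻¹ + β⁻¹) * (A + β))) ≤ 1) : False := by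
  have hApos : 0 < A := lt_trans hβ hA
  have e : (2:ℝ)⁻¹ * (2⁻¹ * (((β⁻¹ * A)⁻¹ * β⁻¹ + β⁻¹) * (A + β))) =
      (A + β) * (A + β) / (4 * (A * β)) := by
    rw [mul_inv, inv_inv]
    field_simp
    ring_nf
    try exact Or.inl trivial
  rw [e, div_le_one (by positivity)] at hle
  nlinarith [mul_pos (sub_pos.mpr hA) (sub_pos.mpr hA)]

/-- Key sub-lemma for the second equality: if the harmonic mean equals the arithmetic
mean then `K ⊆ C`. -/
lemma arith_eq_harm_sub [CompleteSpace E] {K C : Set E}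
    (hKcomp : IsCompact K) (hK0 : 0 ∈ interior K)
    (hCcomp : IsCompact C) (hCconv : Convex ℝ C) (hC0 : 0 ∈ interior C)
    (hEq : polarSet ((2:ℝ)⁻¹ • (polarSet K + polarSet C)) = (2:ℝ)⁻¹ • (K + C)) :
    K ⊆ C := by
  intro x₀ hx₀
  by_contra hx₀C
  obtain ⟨a, s, h1, h2⟩ := sep_point hCcomp.isClosed hCconv hx₀C
  have hs : 0 < s := by have := h1 0 (interior_subset hC0); simpa using this
  have ha : a ≠ 0 := by
    rintro rfl
    rw [inner_zero_left] at h2; linarith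
  obtain ⟨c, hc, hcmax⟩ := exists_max_inner hCcomp ⟨0, interior_subset hC0⟩ a
  obtain ⟨p, hp, hpp⟩ := exists_pos_inner hC0 ha
  have hβ : 0 < ⟪a, c⟫ := lt_of_lt_of_le hpp (hcmax p hp)
  have hβx : ⟪a, c⟫ < ⟪a, x₀⟫ := lt_trans (h1 c hc) h2
  obtain ⟨k, hk, hkmax⟩ := exists_max_inner hKcomp ⟨x₀, hx₀⟩ a
  have hA : ⟪a, c⟫ < ⟪a, k⟫ := lt_of_lt_of_le hβx (hkmax x₀ hx₀)
  have hApos : (0:ℝ) < ⟪a, k⟫ := lt_trans hβ hA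
  -- v ∈ C°
  have hv : (⟪a, c⟫)⁻¹ • a ∈ polarSet C := by
    intro y hy
    rw [real_inner_smul_left]
    calc (⟪a, c⟫)⁻¹ * ⟪a, y⟫ ≤ (⟪a, c⟫)⁻¹ * ⟪a, c⟫ :=
          mul_le_mul_of_nonneg_left (hcmax y hy) (inv_nonneg.mpr hβ.le)
      _ = 1 := inv_mul_cancel₀ hβ.ne'
  -- u ∈ K°
  have hcoefpos : (0:ℝ) < ((⟪a, c⟫)⁻¹ * ⟪a, k⟫)⁻¹ * (⟪a, c⟫)⁻¹ :=
    mul_pos (inv_pos.mpr (mul_pos (inv_pos.mpr hβ) hApos)) (inv_pos.mpr hβ)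
  have hu : (((⟪a, c⟫)⁻¹ * ⟪a, k⟫)⁻¹ * (⟪a, c⟫)⁻¹) • a ∈ polarSet K := by
    intro y hy
    rw [real_inner_smul_left]
    calc ((⟪a, c⟫)⁻¹ * ⟪a, k⟫)⁻¹ * (⟪a, c⟫)⁻¹ * ⟪a, y⟫
        ≤ ((⟪a, c⟫)⁻¹ * ⟪a, k⟫)⁻¹ * (⟪a, c⟫)⁻¹ * ⟪a, k⟫ :=
          mul_le_mul_of_nonneg_left (hkmax y hy) hcoefpos.le
      _ = ((⟪a, c⟫)⁻¹ * ⟪a, k⟫)⁻¹ * ((⟪a, c⟫)⁻¹ * ⟪a, k⟫) := by ring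
      _ = 1 := inv_mul_cancel₀ (mul_pos (inv_pos.mpr hβ) hApos).ne'
  have hy : (2:ℝ)⁻¹ • (k + c) ∈ polarSet ((2:ℝ)⁻¹ • (polarSet K + polarSet C)) := by
    rw [hEq]
    exact ⟨k + c, Set.add_mem_add hk hc, rfl⟩
  have hz : (2:ℝ)⁻¹ • ((((⟪a, c⟫)⁻¹ * ⟪a, k⟫)⁻¹ * (⟪a, c⟫)⁻¹) • a + (⟪a, c⟫)⁻¹ • a) ∈
      (2:ℝ)⁻¹ • (polarSet K + polarSet C) :=
    ⟨_, Set.add_mem_add hu hv, rfl⟩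
  have hle := hy _ hz
  rw [real_inner_smul_left, real_inner_smul_right, ← add_smul, real_inner_smul_right,
    inner_add_left, real_inner_comm a k, real_inner_comm a c] at hle
  exact real_key2 ⟪a, c⟫ ⟪a, k⟫ hβ hA hle

/-- Sub-lemma for the third equality direction: `K ⊆ (K+C)/2` implies `K ⊆ C`. -/
lemma sub_of_half [CompleteSpace E] {K C : Set E} (hKcomp : IsCompact K)
    (hCcl : IsClosed C) (hCconv : Convex ℝ C)
    (h : K ⊆ (2:ℝ)⁻¹ • (K + C)) : K ⊆ C := by
  apply cancel_lemma hKcomp hCcl hCconv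
  intro x hx
  exact mem_half_double (h hx)

theorem stmt_0 {n : ℕ} (K C : Set (EuclideanSpace ℝ (Fin n)))
    (hKcomp : IsCompact K) (hKconv : Convex ℝ K) (hK0 : 0 ∈ interior K)
    (hCcomp : IsCompact C) (hCconv : Convex ℝ C) (hC0 : 0 ∈ interior C) :
    (K ∩ C ⊆ polarSet ((2:ℝ)⁻¹ • (polarSet K + polarSet C)) ∧
      polarSet ((2:ℝ)⁻¹ • (polarSet K + polarSet C)) ⊆ (2:ℝ)⁻¹ • (K + C) ∧
      (2:ℝ)⁻¹ • (K + C) ⊆ convexHull ℝ (K ∪ C)) ∧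
    ((K ∩ C = polarSet ((2:ℝ)⁻¹ • (polarSet K + polarSet C)) ↔ K = C) ∧
      (polarSet ((2:ℝ)⁻¹ • (polarSet K + polarSet C)) = (2:ℝ)⁻¹ • (K + C) ↔ K = C) ∧
      ((2:ℝ)⁻¹ • (K + C) = convexHull ℝ (K ∪ C) ↔ K = C)) := by
  have hK0' : (0 : EuclideanSpace ℝ (Fin n)) ∈ K := interior_subset hK0
  have hC0' : (0 : EuclideanSpace ℝ (Fin n)) ∈ C := interior_subset hC0
  -- Chain inclusion 1 : K ∩ C ⊆ harmonic mean
  have inc1 : K ∩ C ⊆ polarSet ((2:ℝ)⁻¹ • (polarSet K + polarSet C)) := by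
    rintro x ⟨hxK, hxC⟩ z hz
    obtain ⟨y, hy, rfl⟩ := hz
    obtain ⟨u, hu, v, hv, rfl⟩ := Set.mem_add.mp hy
    show ⟪x, (2:ℝ)⁻¹ • (u + v)⟫ ≤ 1
    rw [real_inner_smul_right, inner_add_right]
    have h1 : ⟪x, u⟫ ≤ 1 := by rw [real_inner_comm]; exact hu x hxK
    have h2 : ⟪x, v⟫ ≤ 1 := by rw [real_inner_comm]; exact hv x hxC
    nlinarith
  -- Chain inclusion 2 : harmonic mean ⊆ arithmetic mean
  have inc2 : polarSet ((2:ℝ)⁻¹ • (polarSet K + polarSet C)) ⊆ (2:ℝ)⁻¹ • (K + C) := by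
    intro x hx
    apply half_double_mem
    by_contra hnot
    have hKC : IsCompact (K + C) := hKcomp.add hCcomp
    have hKCconv : Convex ℝ (K + C) := hKconv.add hCconv
    obtain ⟨a, s, h1, h2⟩ := sep_point hKC.isClosed hKCconv hnot
    have hs : 0 < s := by
      have := h1 0 (by simpa using Set.add_mem_add hK0' hC0')
      simpa using this
    have ha : a ≠ 0 := by
      rintro rfl
      rw [inner_zero_left] at h2; linarith
    obtain ⟨k, hk, hkmax⟩ := exists_max_inner hKcomp ⟨0, hK0'⟩ a
    obtain ⟨c, hc, hcmax⟩ := exists_max_inner hCcomp ⟨0, hC0'⟩ a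
    obtain ⟨pK, hpK, hpKpos⟩ := exists_pos_inner hK0 ha
    obtain ⟨pC, hpC, hpCpos⟩ := exists_pos_inner hC0 ha
    have hα : 0 < ⟪a, k⟫ := lt_of_lt_of_le hpKpos (hkmax pK hpK)
    have hβ : 0 < ⟪a, c⟫ := lt_of_lt_of_le hpCpos (hcmax pC hpC)
    have hαβs : ⟪a, k⟫ + ⟪a, c⟫ < s := by
      have hmem : k + c ∈ K + C := Set.add_mem_add hk hc
      have := h1 _ hmem
      rwa [inner_add_right] at this
    have hX : ⟪a, k⟫ + ⟪a, c⟫ < ⟪a, x⟫ + ⟪a, x⟫ := by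
      have h2' : s < ⟪a, x⟫ + ⟪a, x⟫ := by
        rw [← inner_add_right]; exact h2
      linarith
    have hu : (⟪a, k⟫)⁻¹ • a ∈ polarSet K := by
      intro y hy
      rw [real_inner_smul_left]
      calc (⟪a, k⟫)⁻¹ * ⟪a, y⟫ ≤ (⟪a, k⟫)⁻¹ * ⟪a, k⟫ :=
            mul_le_mul_of_nonneg_left (hkmax y hy) (inv_nonneg.mpr hα.le)
        _ = 1 := inv_mul_cancel₀ hα.ne'
    have hv : (⟪a, c⟫)⁻¹ • a ∈ polarSet C := by
      intro y hy
      rw [real_inner_smul_left]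
      calc (⟪a, c⟫)⁻¹ * ⟪a, y⟫ ≤ (⟪a, c⟫)⁻¹ * ⟪a, c⟫ :=
            mul_le_mul_of_nonneg_left (hcmax y hy) (inv_nonneg.mpr hβ.le)
        _ = 1 := inv_mul_cancel₀ hβ.ne'
    have hz : (2:ℝ)⁻¹ • ((⟪a, k⟫)⁻¹ • a + (⟪a, c⟫)⁻¹ • a) ∈
        (2:ℝ)⁻¹ • (polarSet K + polarSet C) :=
      ⟨_, Set.add_mem_add hu hv, rfl⟩
    have hle := hx _ hz
    rw [real_inner_smul_right, ← add_smul, real_inner_smul_right,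
      real_inner_comm a x] at hle
    exact real_key1 ⟪a, k⟫ ⟪a, c⟫ ⟪a, x⟫ hα hβ hX hle
  -- Chain inclusion 3 : arithmetic mean ⊆ convex hull of union
  have inc3 : (2:ℝ)⁻¹ • (K + C) ⊆ convexHull ℝ (K ∪ C) := by
    rintro x ⟨y, hy, rfl⟩
    obtain ⟨k, hk, c, hc, rfl⟩ := Set.mem_add.mp hy
    show (2:ℝ)⁻¹ • (k + c) ∈ convexHull ℝ (K ∪ C)
    rw [smul_add]
    exact (convex_convexHull ℝ (K ∪ C))
      (subset_convexHull ℝ _ (Set.mem_union_left _ hk))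
      (subset_convexHull ℝ _ (Set.mem_union_right _ hc))
      (by norm_num) (by norm_num) (by norm_num)
  -- polar sets data
  have hKpol : IsCompact (polarSet K) := polar_isCompact hK0
  have hCpol : IsCompact (polarSet C) := polar_isCompact hC0
  have hbipK : polarSet (polarSet K) = K := bipolar_eq hKcomp.isClosed hKconv hK0'
  have hbipC : polarSet (polarSet C) = C := bipolar_eq hCcomp.isClosed hCconv hC0'
  have hmeanconv : Convex ℝ ((2:ℝ)⁻¹ • (polarSet K + polarSet C)) :=
    ((convex_polarSet K).add (convex_polarSet C)).smul _
  have hmean0 : (0 : EuclideanSpace ℝ (Fin n)) ∈ (2:ℝ)⁻¹ • (polarSet K + polarSet C) :=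
    ⟨0, by simpa using Set.add_mem_add (zero_mem_polarSet K) (zero_mem_polarSet C), by simp⟩
  have hmeancomp : IsCompact ((2:ℝ)⁻¹ • (polarSet K + polarSet C)) := by
    rw [← Set.image_smul]
    exact (hKpol.add hCpol).image (continuous_const_smul _)
  have hbipmean : polarSet (polarSet ((2:ℝ)⁻¹ • (polarSet K + polarSet C))) =
      (2:ℝ)⁻¹ • (polarSet K + polarSet C) :=
    bipolar_eq hmeancomp.isClosed hmeanconv hmean0
  refine ⟨⟨inc1, inc2, inc3⟩, ?_, ?_, ?_⟩
  · -- equality 1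
    constructor
    · intro hEq
      have hpolEq : polarSet (K ∩ C) = (2:ℝ)⁻¹ • (polarSet K + polarSet C) := by
        rw [hEq, hbipmean]
      have hKsub : polarSet K ⊆ (2:ℝ)⁻¹ • (polarSet K + polarSet C) := by
        rw [← hpolEq]
        exact polarSet_antitone Set.inter_subset_left
      have hCsub : polarSet C ⊆ (2:ℝ)⁻¹ • (polarSet K + polarSet C) := by
        rw [← hpolEq]
        exact polarSet_antitone Set.inter_subset_right
      have h1 : polarSet K ⊆ polarSet C := by
        apply cancel_lemma hKpol (isClosed_polarSet C) (convex_polarSet C)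
        intro u hu
        exact mem_half_double (hKsub hu)
      have h2 : polarSet C ⊆ polarSet K := by
        apply cancel_lemma hCpol (isClosed_polarSet K) (convex_polarSet K)
        intro u hu
        have h3 := hCsub hu
        rw [add_comm (polarSet K) (polarSet C)] at h3
        exact mem_half_double h3
      have h4 : polarSet K = polarSet C := Set.Subset.antisymm h1 h2
      rw [← hbipK, ← hbipC, h4]
    · rintro rfl
      rw [Set.inter_self, halfSumSelf (convex_polarSet K), hbipK]
  · -- equality 2
    constructor
    · intro hEq
      have h1 : K ⊆ C := arith_eq_harm_sub hKcomp hK0 hCcomp hCconv hC0 hEq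
      have hEq' : polarSet ((2:ℝ)⁻¹ • (polarSet C + polarSet K)) = (2:ℝ)⁻¹ • (C + K) := by
        rw [add_comm (polarSet C) (polarSet K), add_comm C K]
        exact hEq
      have h2 : C ⊆ K := arith_eq_harm_sub hCcomp hC0 hKcomp hKconv hK0 hEq'
      exact Set.Subset.antisymm h1 h2
    · rintro rfl
      rw [halfSumSelf (convex_polarSet K), hbipK, halfSumSelf hKconv]
  · -- equality 3
    constructor
    · intro hEq
      have hKsub : K ⊆ (2:ℝ)⁻¹ • (K + C) := by
        rw [hEq]
        exact (Set.subset_union_left).trans (subset_convexHull ℝ _)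
      have hCsub : C ⊆ (2:ℝ)⁻¹ • (C + K) := by
        rw [add_comm C K, hEq]
        exact (Set.subset_union_right).trans (subset_convexHull ℝ _)
      exact Set.Subset.antisymm
        (sub_of_half hKcomp hCcomp.isClosed hCconv hKsub)
        (sub_of_half hCcomp hKcomp.isClosed hKconv hCsub)
    · rintro rfl
      rw [halfSumSelf hKconv, Set.union_self, hKconv.convexHull_eq]
end

section
/- Let C be a Minkowski centered convex body in ℝ^n with 0 in its interior, and s = s(C). Then (C − C)/2 ⊆ ((s+1)/2)·((C° − C°)/2)°. Moreover, for every s ∈ [1, n] there exists a Minkowski centered convex body C in ℝ^n with s(C) = s for which this containment is optimal, i.e., (C − C)/2 ⊂^opt ((s+1)/2)·((C° − C°)/2)°. -/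
/-!
If `C ⊆ s • (-C)` with `s ≥ 0`, then for `u, v ∈ C` and `b, c ∈ C°` we have `⟪b, u⟫ ≤ 1`,
`⟪c, v⟫ ≤ 1`, and, since `-u/s, -v/s ∈ C`, also `-⟪c, u⟫ ≤ s` and `-⟪b, v⟫ ≤ s`. Adding up,
`⟪b - c, u - v⟫ ≤ 2 (s + 1)`, which is the containment. If all four bounds are attained, the
body `(C - C)/2` touches the boundary of the outer body at the opposite points `±(u - v)/2`
in the opposite directions `±(b - c)/2`, which rules out every smaller homothetic copy.

Equality occurs for `C = T ∩ s(-T)` with `T` a simplex: `u` and `v` differ only in one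
coordinate, equal to `1` in `u` and `-s` in `v`, `b` is the corresponding unit vector and
`c = (-1, …, -1)`. Reflecting `u` and the points of the shape of `v` (with `-s` in any
coordinate) through a prospective centre shows `s(C) ≥ s`.
-/

open Pointwise RealInnerProductSpace

variable {E : Type*} [NormedAddCommGroup E] [InnerProductSpace ℝ E]

section Polar

variable {C D : Set E} {s ρ : ℝ} {a b c u v x : E}

lemma minkAsym_nonneg (C : Set E) : 0 ≤ minkAsym C :=
  Real.sInf_nonneg fun _ h => h.1.le

lemma minkAsym_eq_of_forall_le (hs : 0 < s) (hC : C ⊆ s • -C)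
    (hle : ∀ ρ > 0, ∀ c, C - {c} ⊆ ρ • ({c} - C) → s ≤ ρ) : minkAsym C = s :=
  IsLeast.csInf_eq ⟨⟨hs, 0, by simpa using hC⟩, fun ρ ⟨hρ, c, hc⟩ => hle ρ hρ c hc⟩

lemma mem_half_add_neg {A B : Set E} :
    x ∈ (2:ℝ)⁻¹ • (A + -B) ↔ ∃ a ∈ A, ∃ b ∈ B, (2:ℝ)⁻¹ • (a - b) = x := by
  simp [← sub_eq_add_neg, Set.mem_smul_set, Set.mem_sub]

lemma inner_le_of_mem_smul_polarSet (hρ : 0 ≤ ρ) (hx : x ∈ ρ • polarSet D) (ha : a ∈ D) :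
    ⟪x, a⟫ ≤ ρ := by
  obtain ⟨y, hy, rfl⟩ := hx
  rw [real_inner_smul_left]
  exact mul_le_of_le_one_right hρ (hy a ha)

lemma mem_smul_polarSet_of_forall_inner_le (hρ : 0 < ρ) (hx : ∀ a ∈ D, ⟪x, a⟫ ≤ ρ) :
    x ∈ ρ • polarSet D := by
  refine ⟨ρ⁻¹ • x, fun a ha => ?_, smul_inv_smul₀ hρ.ne' x⟩
  rw [real_inner_smul_left]
  exact inv_mul_le_one_of_le₀ (hx a ha) hρ.le

lemma neg_inner_le_of_subset_smul_neg (hs : 0 ≤ s) (hC : C ⊆ s • -C) (ha : a ∈ polarSet C)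
    (hx : x ∈ C) : -⟪a, x⟫ ≤ s := by
  obtain ⟨y, hy, rfl⟩ := hC hx
  rw [real_inner_smul_right, ← mul_neg, ← inner_neg_right]
  exact mul_le_of_le_one_right hs (ha _ hy)

lemma inner_sub_sub_le_of_subset_smul_neg (hs : 0 ≤ s) (hC : C ⊆ s • -C)
    (hb : b ∈ polarSet C) (hc : c ∈ polarSet C) (hu : u ∈ C) (hv : v ∈ C) :
    ⟪b - c, u - v⟫ ≤ 2 * (s + 1) := by
  have hbv := neg_inner_le_of_subset_smul_neg hs hC hb hv
  have hcu := neg_inner_le_of_subset_smul_neg hs hC hc hu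
  simp only [inner_sub_left, inner_sub_right]
  linarith [hb u hu, hc v hv]

theorem half_sub_subset_smul_polarSet_half_sub_polarSet (hs : 0 ≤ s) (hC : C ⊆ s • -C) :
    (2:ℝ)⁻¹ • (C + -C) ⊆
      ((s + 1) / 2) • polarSet ((2:ℝ)⁻¹ • (polarSet C + -polarSet C)) := by
  intro x hx
  obtain ⟨u, hu, v, hv, rfl⟩ := mem_half_add_neg.1 hx
  refine mem_smul_polarSet_of_forall_inner_le (by linarith) fun a ha => ?_
  obtain ⟨b, hb, c, hc, rfl⟩ := mem_half_add_neg.1 ha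
  have := inner_sub_sub_le_of_subset_smul_neg hs hC hb hc hu hv
  rw [real_inner_smul_left, real_inner_smul_right, real_inner_comm]
  linarith

lemma optCont_smul_polarSet_of_inner_eq {K : Set E} {r : ℝ} (hr : 0 < r)
    (hK : K ⊆ r • polarSet D) (hx : x ∈ K) (hnx : -x ∈ K) (ha : a ∈ D) (hna : -a ∈ D)
    (hxa : ⟪x, a⟫ = r) : OptCont K (r • polarSet D) := by
  refine ⟨hK, ?_⟩
  rintro ⟨ρ, hρ0, hρ1, t, hsub⟩
  have hbound {y} (hy : y ∈ K) {d} (hd : d ∈ D) : ⟪y - t, d⟫ ≤ ρ * r := by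
    have hy' := hsub hy
    rw [Set.add_singleton] at hy'
    obtain ⟨z, hz, rfl⟩ := hy'
    rw [add_sub_cancel_right]
    rw [smul_smul] at hz
    exact inner_le_of_mem_smul_polarSet (by positivity) hz hd
  have h1 := hbound hx ha
  have h2 := hbound hnx hna
  simp only [inner_sub_left, inner_neg_left, inner_neg_right, hxa] at h1 h2
  nlinarith

theorem optCont_half_sub_smul_polarSet_half_sub_polarSet (hs : 0 ≤ s) (hC : C ⊆ s • -C)
    (hb : b ∈ polarSet C) (hc : c ∈ polarSet C) (hu : u ∈ C) (hv : v ∈ C)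
    (heq : ⟪b - c, u - v⟫ = 2 * (s + 1)) :
    OptCont ((2:ℝ)⁻¹ • (C + -C))
      (((s + 1) / 2) • polarSet ((2:ℝ)⁻¹ • (polarSet C + -polarSet C))) := by
  have hneg {A B : Set E} {x y : E} (hx : x ∈ A) (hy : y ∈ B) :
      -((2:ℝ)⁻¹ • (x - y)) ∈ (2:ℝ)⁻¹ • (B + -A) :=
    mem_half_add_neg.2 ⟨y, hy, x, hx, by rw [← smul_neg, neg_sub]⟩
  refine optCont_smul_polarSet_of_inner_eq (by linarith)
    (half_sub_subset_smul_polarSet_half_sub_polarSet hs hC)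
    (mem_half_add_neg.2 ⟨u, hu, v, hv, rfl⟩) (hneg hu hv)
    (mem_half_add_neg.2 ⟨b, hb, c, hc, rfl⟩) (hneg hb hc) ?_
  rw [real_inner_smul_left, real_inner_smul_right, real_inner_comm, heq]
  ring

end Polar

/-- `T ∩ s • (-T)` for the simplex `T = {x | ∀ i, xᵢ ≤ 1, -1 ≤ ∑ i, xᵢ}`. -/
def truncatedSimplex (n : ℕ) (s : ℝ) : Set (EuclideanSpace ℝ (Fin n)) :=
  {x | (∀ i, -s ≤ x i ∧ x i ≤ 1) ∧ -1 ≤ ∑ i, x i ∧ ∑ i, x i ≤ s}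

namespace truncatedSimplex

variable {n : ℕ} {s : ℝ}

lemma isClosed : IsClosed (truncatedSimplex n s) := by
  simp only [truncatedSimplex, Set.ofPred_and, Set.ofPred_forall]
  refine (isClosed_iInter fun i => (isClosed_le ?_ ?_).inter (isClosed_le ?_ ?_)).inter
    ((isClosed_le ?_ ?_).inter (isClosed_le ?_ ?_)) <;> fun_prop

lemma convex : Convex ℝ (truncatedSimplex n s) := by
  have hcoord (i : Fin n) : IsLinearMap ℝ fun x : EuclideanSpace ℝ (Fin n) => x i :=
    (EuclideanSpace.proj i).isLinear
  have hsum : IsLinearMap ℝ fun x : EuclideanSpace ℝ (Fin n) => ∑ i, x i :=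
    ⟨fun x y => by simp [Finset.sum_add_distrib], fun r x => by simp [Finset.mul_sum]⟩
  simp only [truncatedSimplex, Set.ofPred_and, Set.ofPred_forall]
  exact (convex_iInter fun i => (convex_halfSpace_ge (hcoord i) _).inter
    (convex_halfSpace_le (hcoord i) _)).inter
    ((convex_halfSpace_ge hsum _).inter (convex_halfSpace_le hsum _))

lemma isCompact : IsCompact (truncatedSimplex n s) :=
  ((isCompact_univ_pi fun _ => isCompact_Icc (a := -s) (b := 1)).image
    (PiLp.continuous_toLp 2 _)).of_isClosed_subset isClosed
    fun x hx => ⟨x.ofLp, fun i _ => hx.1 i, rfl⟩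

lemma zero_mem_interior (hs : 0 < s) : 0 ∈ interior (truncatedSimplex n s) := by
  let U : Set (EuclideanSpace ℝ (Fin n)) :=
    {x | (∀ i, -s < x i ∧ x i < 1) ∧ -1 < ∑ i, x i ∧ ∑ i, x i < s}
  have hU : IsOpen U := by
    simp only [U, Set.ofPred_and, Set.ofPred_forall]
    refine (isOpen_iInter_of_finite fun i => (isOpen_lt ?_ ?_).inter (isOpen_lt ?_ ?_)).inter
      ((isOpen_lt ?_ ?_).inter (isOpen_lt ?_ ?_)) <;> fun_prop
  refine interior_maximal (fun x hx => ?_) hU ⟨fun i => ?_, ?_, ?_⟩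
  · exact ⟨fun i => ⟨(hx.1 i).1.le, (hx.1 i).2.le⟩, hx.2.1.le, hx.2.2.le⟩
  all_goals simp [hs]

lemma neg_inv_smul_mem (hs : 1 ≤ s) {x : EuclideanSpace ℝ (Fin n)}
    (hx : x ∈ truncatedSimplex n s) : -(s⁻¹ • x) ∈ truncatedSimplex n s := by
  have hs0 : 0 < s := by linarith
  obtain ⟨hcoord, hlo, hhi⟩ := hx
  have hcoord' (i : Fin n) : (-(s⁻¹ • x)) i = -(x i / s) := by simp [div_eq_inv_mul]
  have hsum : ∑ i, (-(s⁻¹ • x)) i = -((∑ i, x i) / s) := by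
    simp only [hcoord', Finset.sum_neg_distrib, Finset.sum_div]
  refine ⟨fun i => ⟨?_, ?_⟩, ?_, ?_⟩
  · rw [hcoord', neg_le_neg_iff, div_le_iff₀ hs0]
    nlinarith [(hcoord i).2]
  · rw [hcoord', neg_le, le_div_iff₀ hs0]
    linarith [(hcoord i).1]
  · rw [hsum, neg_le_neg_iff, div_le_iff₀ hs0]
    linarith
  · rw [hsum, neg_le, le_div_iff₀ hs0]
    nlinarith

lemma subset_smul_neg (hs : 1 ≤ s) : truncatedSimplex n s ⊆ s • -truncatedSimplex n s :=
  fun x hx => ⟨s⁻¹ • x, Set.mem_neg.2 (neg_inv_smul_mem hs hx),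
    smul_inv_smul₀ (by positivity) x⟩

noncomputable def pointAt (n : ℕ) (s : ℝ) (i : Fin n) (t : ℝ) : EuclideanSpace ℝ (Fin n) :=
  WithLp.toLp 2 fun j => if j = i then t else (s - 1) / (n - 1)

lemma sum_pointAt (hs : 1 ≤ s) (hsn : s ≤ n) (i : Fin n) (t : ℝ) :
    ∑ j, pointAt n s i t j = t + (s - 1) := by
  set δ := (s - 1) / ((n : ℝ) - 1)
  have hsplit (j : Fin n) : pointAt n s i t j = δ + if j = i then t - δ else 0 := by
    by_cases hj : j = i <;> simp [pointAt, hj, δ]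
  have hδ : ((n : ℝ) - 1) * δ = s - 1 := by
    rcases (show (1 : ℝ) ≤ n by linarith).eq_or_lt with hn | hn
    · simp [← hn, le_antisymm (hn ▸ hsn) hs]
    · exact mul_div_cancel₀ _ (by linarith)
  simp only [hsplit, Finset.sum_add_distrib, Finset.sum_ite_eq', Finset.mem_univ, if_true,
    Finset.sum_const, Finset.card_univ, Fintype.card_fin, nsmul_eq_mul]
  linarith

lemma pointAt_mem (hs : 1 ≤ s) (hsn : s ≤ n) (i : Fin n) {t : ℝ} (ht : -s ≤ t ∧ t ≤ 1) :
    pointAt n s i t ∈ truncatedSimplex n s := by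
  have hδ0 : 0 ≤ (s - 1) / ((n : ℝ) - 1) := div_nonneg (by linarith) (by linarith)
  have hδ1 : (s - 1) / ((n : ℝ) - 1) ≤ 1 := div_le_one_of_le₀ (by linarith) (by linarith)
  refine ⟨fun j => ?_, ?_⟩
  · by_cases hj : j = i
    · simpa [pointAt, hj] using ht
    · simp only [pointAt, hj, if_false]
      exact ⟨by linarith, hδ1⟩
  · rw [sum_pointAt hs hsn]
    constructor <;> linarith

lemma le_of_sub_singleton_subset (hs : 1 ≤ s) (hsn : s ≤ n) {ρ : ℝ} (hρ : 0 < ρ)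
    {c : EuclideanSpace ℝ (Fin n)}
    (hc : truncatedSimplex n s - {c} ⊆ ρ • ({c} - truncatedSimplex n s)) : s ≤ ρ := by
  have hreflect {x} (hx : x ∈ truncatedSimplex n s) :
      ∃ y ∈ truncatedSimplex n s, x - c = ρ • (c - y) := by
    obtain ⟨_, ⟨_, rfl, y, hy, rfl⟩, hxy⟩ := hc (Set.sub_mem_sub hx rfl)
    exact ⟨y, hy, hxy.symm⟩
  -- reflecting the points with a coordinate `-s` bounds every `cᵢ` from above ...
  have hcoord (i : Fin n) : (1 + ρ) * c i + s ≤ ρ := by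
    obtain ⟨y, hy, hxy⟩ := hreflect (pointAt_mem hs hsn i ⟨le_rfl, by linarith⟩)
    have := congrArg (· i) hxy
    simp only [pointAt, PiLp.sub_apply, PiLp.smul_apply, smul_eq_mul, if_true] at this
    nlinarith [(hy.1 i).2]
  -- ... and reflecting a point on the facet `∑ xᵢ = s` bounds `∑ cᵢ` from below
  have hn : 0 < n := Nat.cast_pos.1 (by linarith : (0 : ℝ) < n)
  obtain ⟨y, hy, hxy⟩ := hreflect (pointAt_mem hs hsn ⟨0, hn⟩ ⟨by linarith, le_rfl⟩)
  have hsum := congrArg (fun z : EuclideanSpace ℝ (Fin n) => ∑ i, z i) hxy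
  simp only [PiLp.sub_apply, PiLp.smul_apply, smul_eq_mul, Finset.sum_sub_distrib,
    ← Finset.mul_sum, sum_pointAt hs hsn] at hsum
  have hcsum := Finset.sum_le_sum fun i (_ : i ∈ Finset.univ) => hcoord i
  simp only [Finset.sum_add_distrib, ← Finset.mul_sum, Finset.sum_const, Finset.card_univ,
    Fintype.card_fin, nsmul_eq_mul] at hcsum
  nlinarith [hy.2.1]

lemma minkAsym_eq (hs : 1 ≤ s) (hsn : s ≤ n) : minkAsym (truncatedSimplex n s) = s :=
  minkAsym_eq_of_forall_le (by linarith) (subset_smul_neg hs)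
    fun _ hρ _ hc => le_of_sub_singleton_subset hs hsn hρ hc

lemma minkCentered (hs : 1 ≤ s) (hsn : s ≤ n) : MinkCentered (truncatedSimplex n s) := by
  rw [MinkCentered, minkAsym_eq hs hsn]
  exact subset_smul_neg hs

lemma single_mem_polarSet (i : Fin n) :
    EuclideanSpace.single i 1 ∈ polarSet (truncatedSimplex n s) := fun x hx => by
  simpa [EuclideanSpace.inner_single_left] using (hx.1 i).2

lemma neg_one_mem_polarSet :
    (WithLp.toLp 2 fun _ => -1 : EuclideanSpace ℝ (Fin n)) ∈ polarSet (truncatedSimplex n s) :=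
  fun x hx => by
    simp only [PiLp.inner_apply, RCLike.inner_apply, Real.ringHom_apply, mul_neg, mul_one,
      Finset.sum_neg_distrib]
    linarith [hx.2.1]

lemma optCont (hs : 1 ≤ s) (hsn : s ≤ n) :
    OptCont ((2:ℝ)⁻¹ • (truncatedSimplex n s + -truncatedSimplex n s))
      (((s + 1) / 2) • polarSet ((2:ℝ)⁻¹ •
        (polarSet (truncatedSimplex n s) + -polarSet (truncatedSimplex n s)))) := by
  have hn : 0 < n := Nat.cast_pos.1 (by linarith : (0 : ℝ) < n)
  let i : Fin n := ⟨0, hn⟩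
  refine optCont_half_sub_smul_polarSet_half_sub_polarSet (by linarith) (subset_smul_neg hs)
    (single_mem_polarSet i) neg_one_mem_polarSet (pointAt_mem hs hsn i ⟨by linarith, le_rfl⟩)
    (pointAt_mem hs hsn i ⟨le_rfl, by linarith⟩) ?_
  simp only [PiLp.inner_apply, PiLp.sub_apply, pointAt, PiLp.single_apply,
    RCLike.inner_apply, conj_trivial]
  rw [Finset.sum_eq_single i (fun j _ hj => by simp [hj]) (by simp)]
  simp only [if_true]
  ring

end truncatedSimplex

theorem stmt_7 (n : ℕ) :
    (∀ C : Set (EuclideanSpace ℝ (Fin n)), IsCompact C → Convex ℝ C →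
      (interior C).Nonempty → 0 ∈ interior C → MinkCentered C →
      (2:ℝ)⁻¹ • (C + -C) ⊆
        ((minkAsym C + 1) / 2) • polarSet ((2:ℝ)⁻¹ • (polarSet C + -polarSet C))) ∧
    (∀ s : ℝ, 1 ≤ s → s ≤ (n : ℝ) →
      ∃ C : Set (EuclideanSpace ℝ (Fin n)), IsCompact C ∧ Convex ℝ C ∧
        (interior C).Nonempty ∧ 0 ∈ interior C ∧ MinkCentered C ∧ minkAsym C = s ∧
        OptCont ((2:ℝ)⁻¹ • (C + -C))
          (((s + 1) / 2) • polarSet ((2:ℝ)⁻¹ • (polarSet C + -polarSet C)))) := by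
  refine ⟨fun C _ _ _ _ hC => half_sub_subset_smul_polarSet_half_sub_polarSet
    (minkAsym_nonneg C) hC, fun s hs hsn => ?_⟩
  have h0 := truncatedSimplex.zero_mem_interior (n := n) (by linarith : 0 < s)
  exact ⟨truncatedSimplex n s, truncatedSimplex.isCompact, truncatedSimplex.convex,
    ⟨0, h0⟩, h0, truncatedSimplex.minkCentered hs hsn, truncatedSimplex.minkAsym_eq hs hsn,
    truncatedSimplex.optCont hs hsn⟩
end

section
/- Let n ≥ 2 and let γ₁(n) = (n − 1 + √((n−2)n + 5))/2. Then for every s ∈ [1, γ₁(n)] there exists a Minkowski centered convex body C in ℝ^n with s(C) = s such that C ∩ (−C) is optimally contained in conv(C ∪ (−C)). -/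
open Pointwise RealInnerProductSpace

variable {E : Type*} [NormedAddCommGroup E] [InnerProductSpace ℝ E]

/-!
Take `C = conv (A ∪ (-s⁻¹) • A)` in `ℝ^(m+1)`, `m = n - 1`, where `A` consists of `(±1, 0)`,
`(±1, 𝟙)` and the points `(0, 𝟙 - (1 + s) eᵢ)`. Every generator `a` has `-a/s ∈ C`, and `0 ∈ C`,
so `C ⊆ s • (-C)`. Conversely, each of the functionals `u± = ±x₀ + (s - 1)/m · ∑ᵢ xᵢ` and `-xᵢ`
(`i ≥ 1`) is `≥ -1` on `C` and equals `s` at a generator of `C`; for `u±` this is where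
`s ^ 2 ≤ m s + 1`, i.e. `s ≤ γ₁(n)`, is needed. If `C - c ⊆ ρ • (c - C)`, each such functional `u`
gives `s ≤ (1 + ρ) u(c) + ρ`, and since `u₊ + u₋ + 2 (s - 1)/m · ∑ᵢ (-xᵢ) = 0` these inequalities
combine to `s ≤ ρ`. Finally `±e₀ ∈ C ∩ -C`, while `|x₀| ≤ 1` on `conv (C ∪ -C)`: both sets have the
same width in direction `e₀`, which rules out a homothetic copy of ratio `< 1`.
-/

section ReflectedHull

variable {V : Type*} [AddCommGroup V] [Module ℝ V] {A : Set V} {s : ℝ}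

lemma zero_mem_convexHull_union_smul_neg (hs : 0 < s) (hA : A.Nonempty) :
    (0 : V) ∈ convexHull ℝ (A ∪ (-s⁻¹) • A) := by
  obtain ⟨a, ha⟩ := hA
  have hmem := convex_convexHull ℝ (A ∪ (-s⁻¹) • A)
    (subset_convexHull ℝ _ (Or.inl ha)) (subset_convexHull ℝ _ (Or.inr (Set.smul_mem_smul_set ha)))
    (a := 1 / (1 + s)) (b := s / (1 + s)) (by positivity) (by positivity) (by field_simp)
  convert hmem using 1
  rw [smul_smul, ← add_smul]
  field_simp
  simp

lemma convexHull_union_smul_neg_subset_smul_neg (hs : 1 ≤ s) (hA : A.Nonempty) :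
    convexHull ℝ (A ∪ (-s⁻¹) • A) ⊆ s • -convexHull ℝ (A ∪ (-s⁻¹) • A) := by
  have hs0 : 0 < s := by linarith
  set C := convexHull ℝ (A ∪ (-s⁻¹) • A)
  have hsC : ∀ y ∈ C, s • -y ∈ s • -C := fun y hy =>
    Set.smul_mem_smul_set (Set.neg_mem_neg.mpr hy)
  refine convexHull_min ?_ ((convex_convexHull ℝ _).neg.smul s)
  rintro _ (ha | ⟨a, ha, rfl⟩)
  · convert hsC _ (subset_convexHull ℝ _ (Or.inr (Set.smul_mem_smul_set ha))) using 1
    rw [neg_smul, neg_neg, smul_inv_smul₀ hs0.ne']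
  · have hsq : (s⁻¹ * s⁻¹) • a ∈ C :=
      (convex_convexHull ℝ _).smul_mem_of_zero_mem (zero_mem_convexHull_union_smul_neg hs0 hA)
        (subset_convexHull ℝ _ (Or.inl ha))
        ⟨by positivity, mul_le_one₀ (inv_le_one_of_one_le₀ hs) (by positivity)
          (inv_le_one_of_one_le₀ hs)⟩
    convert hsC _ hsq using 1
    rw [smul_neg, smul_smul, ← mul_assoc, mul_inv_cancel₀ hs0.ne', one_mul]
    exact neg_smul _ _

lemma le_one_of_mem_convexHull_union_smul_neg (hs : 0 < s) {f : V →ₗ[ℝ] ℝ}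
    (hf : ∀ a ∈ A, f a ∈ Set.Icc (-s) 1) {x : V} (hx : x ∈ convexHull ℝ (A ∪ (-s⁻¹) • A)) :
    f x ≤ 1 := by
  refine convexHull_min ?_ ((convex_Iic 1).linear_preimage f) hx
  rintro _ (ha | ⟨a, ha, rfl⟩)
  · exact (hf _ ha).2
  · have := (hf a ha).1
    show f ((-s⁻¹) • a) ≤ 1
    rw [map_smul, smul_eq_mul, neg_mul, neg_le, ← div_eq_inv_mul, le_div_iff₀ hs]
    linarith

lemma le_of_sub_singleton_subset_smul {C : Set V} {c p : V} {ρ t : ℝ} (hρ : 0 ≤ ρ)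
    (hC : C - {c} ⊆ ρ • ({c} - C)) {f : V →ₗ[ℝ] ℝ} (hf : ∀ y ∈ C, -1 ≤ f y) (hp : p ∈ C)
    (hfp : t ≤ f p) : t ≤ (1 + ρ) * f c + ρ := by
  obtain ⟨_, ⟨_, rfl, y, hy, rfl⟩, hpy⟩ := hC (Set.sub_mem_sub hp rfl)
  have hfpy := congrArg f hpy
  simp only [map_smul, map_sub, smul_eq_mul] at hfpy
  nlinarith [hf y hy]

end ReflectedHull

lemma interior_convexHull_union_smul_neg_nonempty {W : Type*} [NormedAddCommGroup W]
    [NormedSpace ℝ W] [FiniteDimensional ℝ W] {A : Set W} {s : ℝ} (hs : 0 < s)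
    (hA : A.Nonempty) (hspan : Submodule.span ℝ A = ⊤) :
    (interior (convexHull ℝ (A ∪ (-s⁻¹) • A))).Nonempty := by
  rw [interior_convexHull_nonempty_iff_affineSpan_eq_top,
    AffineSubspace.affineSpan_eq_top_iff_vectorSpan_eq_top_of_nonempty ℝ W W
      (hA.mono Set.subset_union_left), eq_top_iff, ← hspan, Submodule.span_le]
  intro a ha
  have hsub := vsub_mem_vectorSpan ℝ (s := A ∪ (-s⁻¹) • A) (Or.inl ha)
    (Or.inr (Set.smul_mem_smul_set ha))
  have hne : 1 + s⁻¹ ≠ 0 := by positivity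
  have hdiff : a -ᵥ (-s⁻¹) • a = (1 + s⁻¹) • a := by
    rw [vsub_eq_sub, add_smul, one_smul, neg_smul, sub_neg_eq_add]
  rw [hdiff] at hsub
  simpa [hne] using Submodule.smul_mem _ (1 + s⁻¹)⁻¹ hsub

lemma minkAsym_eq_of_subset_smul_neg {C : Set E} {s : ℝ} (hs : 0 < s) (hC : C ⊆ s • -C)
    (hlow : ∀ ρ > 0, ∀ c, C - {c} ⊆ ρ • ({c} - C) → s ≤ ρ) : minkAsym C = s := by
  have hmem : s ∈ {ρ : ℝ | 0 < ρ ∧ ∃ c : E, C - {c} ⊆ ρ • ({c} - C)} :=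
    ⟨hs, 0, by simpa using hC⟩
  exact le_antisymm (csInf_le ⟨s, fun ρ ⟨hρ, c, hc⟩ => hlow ρ hρ c hc⟩ hmem)
    (le_csInf ⟨s, hmem⟩ fun ρ ⟨hρ, c, hc⟩ => hlow ρ hρ c hc)

lemma optCont_of_width_eq {K L : Set E} (hKL : K ⊆ L) {f : E →ₗ[ℝ] ℝ} {p q : E} (hp : p ∈ K)
    (hq : q ∈ K) (hpq : f q < f p) (hL : ∀ x ∈ L, f x ∈ Set.Icc (f q) (f p)) :
    OptCont K L := by
  refine ⟨hKL, ?_⟩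
  rintro ⟨ρ, hρ0, hρ1, t, hK⟩
  obtain ⟨_, ⟨x, hx, rfl⟩, _, rfl, hpx⟩ := hK hp
  obtain ⟨_, ⟨y, hy, rfl⟩, _, rfl, hqy⟩ := hK hq
  have hfx := hL x hx
  have hfy := hL y hy
  rw [← hpx, ← hqy] at hfx hfy hpq
  simp only [map_add, map_smul, smul_eq_mul, Set.mem_Icc] at hfx hfy hpq
  nlinarith

namespace GammaOneBody

noncomputable def pt {m : ℕ} (a : ℝ) (b : Fin m → ℝ) : EuclideanSpace ℝ (Fin (m + 1)) :=
  WithLp.toLp 2 (Fin.cons a b)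

variable (m : ℕ) (s : ℝ)

def gens : Set (EuclideanSpace ℝ (Fin (m + 1))) :=
  {pt 1 0, pt (-1) 0, pt 1 1, pt (-1) 1} ∪ Set.range fun i => pt 0 (Function.update 1 i (-s))

noncomputable def body : Set (EuclideanSpace ℝ (Fin (m + 1))) :=
  convexHull ℝ (gens m s ∪ (-s⁻¹) • gens m s)

def coord (i : Fin (m + 1)) : EuclideanSpace ℝ (Fin (m + 1)) →ₗ[ℝ] ℝ :=
  PiLp.projₗ 2 (fun _ => ℝ) i

noncomputable def tilt (ε : ℝ) : EuclideanSpace ℝ (Fin (m + 1)) →ₗ[ℝ] ℝ :=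
  ε • coord m 0 + ((s - 1) / m) • ∑ i : Fin m, coord m i.succ

variable {m s}

@[simp] lemma coord_zero_pt (a : ℝ) (b : Fin m → ℝ) : coord m 0 (pt a b) = a := rfl

@[simp] lemma coord_succ_pt (a : ℝ) (b : Fin m → ℝ) (i : Fin m) :
    coord m i.succ (pt a b) = b i := rfl

lemma tilt_pt (ε a : ℝ) (b : Fin m → ℝ) :
    tilt m s ε (pt a b) = ε * a + (s - 1) / m * ∑ i, b i := by
  simp [tilt]

lemma sum_update_one (i : Fin m) : ∑ j, Function.update (1 : Fin m → ℝ) i (-s) j = m - 1 - s := by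
  have : 1 ≤ m := Fin.pos i
  simp only [Finset.sum_update_of_mem, Finset.mem_univ, Pi.one_apply, Finset.sum_const,
    Finset.card_sdiff, Finset.card_univ, Fintype.card_fin, Finset.inter_univ, Finset.card_singleton,
    nsmul_eq_mul, Nat.cast_sub this, Nat.cast_one, mul_one]
  ring

lemma forall_mem_gens {P : EuclideanSpace ℝ (Fin (m + 1)) → Prop} :
    (∀ x ∈ gens m s, P x) ↔ P (pt 1 0) ∧ P (pt (-1) 0) ∧ P (pt 1 1) ∧ P (pt (-1) 1) ∧
      ∀ i, P (pt 0 (Function.update 1 i (-s))) := by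
  simp [gens, or_imp, forall_and, and_assoc]

lemma mem_body_of_mem_gens {x : EuclideanSpace ℝ (Fin (m + 1))} (hx : x ∈ gens m s) :
    x ∈ body m s :=
  subset_convexHull ℝ _ (Or.inl hx)

lemma coord_succ_le_one (hs : 0 < s) (i : Fin m) {x} (hx : x ∈ body m s) :
    coord m i.succ x ≤ 1 := by
  refine le_one_of_mem_convexHull_union_smul_neg hs ?_ hx
  simp only [forall_mem_gens, coord_succ_pt, Pi.zero_apply, Pi.one_apply, Function.update_apply,
    Set.mem_Icc]
  refine ⟨?_, ?_, ?_, ?_, fun j => ?_⟩ <;> (try split_ifs) <;> constructor <;> linarith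

lemma coord_zero_mem_Icc (hs : 1 ≤ s) {x} (hx : x ∈ body m s) :
    coord m 0 x ∈ Set.Icc (-1) 1 := by
  have hs0 : 0 < s := by linarith
  have hbound : ∀ a ∈ gens m s,
      coord m 0 a ∈ Set.Icc (-s) 1 ∧ (-coord m 0) a ∈ Set.Icc (-s) 1 := by
    simp [forall_mem_gens, hs, hs0.le, show -s ≤ 1 by linarith, show -1 ≤ s by linarith]
  have hle := le_one_of_mem_convexHull_union_smul_neg hs0 (fun a ha => (hbound a ha).1) hx
  have hge := le_one_of_mem_convexHull_union_smul_neg hs0 (fun a ha => (hbound a ha).2) hx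
  rw [LinearMap.neg_apply] at hge
  exact ⟨by linarith, hle⟩

lemma neg_one_le_tilt (hm : 0 < m) (hs : 1 ≤ s) (hkey : s ^ 2 ≤ m * s + 1) {ε : ℝ}
    (hε : |ε| ≤ 1) {x} (hx : x ∈ body m s) : -1 ≤ tilt m s ε x := by
  have hm' : (0 : ℝ) < m := by exact_mod_cast hm
  have hκ : (s - 1) / m * m = s - 1 := div_mul_cancel₀ _ hm'.ne'
  have hκ0 : 0 ≤ (s - 1) / m := div_nonneg (by linarith) hm'.le
  have hκs : (s - 1) / m * (1 + s) ≤ s := by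
    rw [div_mul_eq_mul_div, div_le_iff₀ hm']
    nlinarith
  obtain ⟨hε1, hε2⟩ := abs_le.mp hε
  have hbound : ∀ a ∈ gens m s, (-tilt m s ε) a ∈ Set.Icc (-s) 1 := by
    simp only [forall_mem_gens, LinearMap.neg_apply, tilt_pt, sum_update_one, Pi.zero_apply,
      Pi.one_apply, Finset.sum_const_zero, Finset.sum_const, Finset.card_univ, Fintype.card_fin,
      nsmul_eq_mul, mul_one, hκ, Set.mem_Icc]
    refine ⟨⟨?_, ?_⟩, ⟨?_, ?_⟩, ⟨?_, ?_⟩, ⟨?_, ?_⟩, fun _ => ⟨?_, ?_⟩⟩ <;> nlinarith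
  have := le_one_of_mem_convexHull_union_smul_neg (by linarith) hbound hx
  rw [LinearMap.neg_apply] at this
  linarith

lemma gens_nonempty : (gens m s).Nonempty := ⟨pt 1 0, by simp [gens]⟩

lemma isCompact_body : IsCompact (body m s) := by
  have hfin : (gens m s).Finite := (Set.toFinite _).union (Set.finite_range _)
  exact (hfin.union hfin.smul_set).isCompact_convexHull (𝕜 := ℝ)

lemma body_subset_smul_neg (hs : 1 ≤ s) : body m s ⊆ s • -body m s :=
  convexHull_union_smul_neg_subset_smul_neg hs gens_nonempty

lemma neg_pt (a : ℝ) (b : Fin m → ℝ) : -pt a b = pt (-a) (-b) := by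
  ext j
  refine Fin.cases ?_ (fun i => ?_) j <;> simp [pt]

lemma single_zero_eq_pt : EuclideanSpace.single (0 : Fin (m + 1)) (1 : ℝ) = pt 1 0 := by
  ext j
  refine Fin.cases ?_ (fun i => ?_) j <;> simp [pt]

lemma single_succ_eq (hs : 0 < s) (i : Fin m) : EuclideanSpace.single i.succ (1 : ℝ) =
    (1 + s)⁻¹ • (pt 1 1 - pt 1 0 - pt 0 (Function.update 1 i (-s))) := by
  ext j
  refine Fin.cases ?_ (fun k => ?_) j
  · simp [pt, (Fin.succ_ne_zero i).symm]
  · by_cases hk : k = i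
    · subst hk
      simp [pt, show 1 + s ≠ 0 by positivity]
    · simp [pt, hk]

lemma span_gens (hs : 0 < s) : Submodule.span ℝ (gens m s) = ⊤ := by
  rw [eq_top_iff, ← (EuclideanSpace.basisFun (Fin (m + 1)) ℝ).toBasis.span_eq, Submodule.span_le]
  rintro _ ⟨j, rfl⟩
  rw [OrthonormalBasis.coe_toBasis, EuclideanSpace.basisFun_apply]
  have hmem : ∀ x ∈ gens m s, x ∈ Submodule.span ℝ (gens m s) := fun _ hx => Submodule.subset_span hx
  refine Fin.cases ?_ (fun i => ?_) j
  · rw [single_zero_eq_pt]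
    exact hmem _ (by simp [gens])
  · rw [single_succ_eq hs]
    refine Submodule.smul_mem _ _ (Submodule.sub_mem _ (Submodule.sub_mem _ ?_ ?_) ?_) <;>
      exact hmem _ (by simp [gens])

lemma interior_body_nonempty (hs : 0 < s) : (interior (body m s)).Nonempty :=
  interior_convexHull_union_smul_neg_nonempty hs gens_nonempty (span_gens hs)

lemma le_of_body_sub_subset (hm : 0 < m) (hs : 1 ≤ s) (hkey : s ^ 2 ≤ m * s + 1) {ρ : ℝ}
    (hρ : 0 < ρ) {c : EuclideanSpace ℝ (Fin (m + 1))}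
    (hc : body m s - {c} ⊆ ρ • ({c} - body m s)) : s ≤ ρ := by
  have hm' : (0 : ℝ) < m := by exact_mod_cast hm
  have hκ : (s - 1) / m * m = s - 1 := div_mul_cancel₀ _ hm'.ne'
  have hκ0 : 0 ≤ (s - 1) / m := div_nonneg (by linarith) hm'.le
  have hplus := le_of_sub_singleton_subset_smul (t := s) hρ.le hc
    (fun y hy => neg_one_le_tilt hm hs hkey (ε := 1) (by norm_num) hy)
    (mem_body_of_mem_gens (x := pt 1 1) (by simp [gens])) (by simp [tilt_pt, hκ])
  have hminus := le_of_sub_singleton_subset_smul (t := s) hρ.le hc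
    (fun y hy => neg_one_le_tilt hm hs hkey (ε := -1) (by norm_num) hy)
    (mem_body_of_mem_gens (x := pt (-1) 1) (by simp [gens])) (by simp [tilt_pt, hκ])
  have hcoord : ∀ i : Fin m, s ≤ (1 + ρ) * (-coord m i.succ c) + ρ := fun i =>
    le_of_sub_singleton_subset_smul hρ.le hc (f := -coord m i.succ)
      (fun y hy => by simpa using coord_succ_le_one (by linarith) i hy)
      (mem_body_of_mem_gens (x := pt 0 (Function.update 1 i (-s))) (by simp [gens]))
      (by simp)
  have hsum := Finset.sum_le_sum fun i (_ : i ∈ Finset.univ) => hcoord i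
  simp only [Finset.sum_const, Finset.card_univ, Fintype.card_fin, nsmul_eq_mul,
    Finset.sum_add_distrib, ← Finset.mul_sum, Finset.sum_neg_distrib] at hsum
  simp only [tilt, LinearMap.add_apply, LinearMap.smul_apply, LinearMap.sum_apply,
    smul_eq_mul] at hplus hminus
  have hss : s * s ≤ s * ρ := by nlinarith [mul_le_mul_of_nonneg_left hsum hκ0]
  exact le_of_mul_le_mul_left hss (by linarith)

lemma minkAsym_body (hm : 0 < m) (hs : 1 ≤ s) (hkey : s ^ 2 ≤ m * s + 1) :
    minkAsym (body m s) = s :=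
  minkAsym_eq_of_subset_smul_neg (by linarith) (body_subset_smul_neg hs)
    fun _ hρ _ hc => le_of_body_sub_subset hm hs hkey hρ hc

lemma optCont_body (hs : 1 ≤ s) :
    OptCont (body m s ∩ -body m s) (convexHull ℝ (body m s ∪ -body m s)) := by
  have hp : pt 1 0 ∈ body m s ∩ -body m s := by
    refine ⟨mem_body_of_mem_gens (by simp [gens]), ?_⟩
    rw [Set.mem_neg, neg_pt]
    exact mem_body_of_mem_gens (by simp [gens])
  have hq : pt (-1) 0 ∈ body m s ∩ -body m s := by
    rw [← neg_zero, ← neg_pt]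
    exact ⟨hp.2, Set.neg_mem_neg.mpr hp.1⟩
  refine optCont_of_width_eq (fun x hx => subset_convexHull ℝ _ (Or.inl hx.1)) hp hq
    (f := coord m 0) (by simp) ?_
  refine fun x hx => convexHull_min ?_ ((convex_Icc _ _).linear_preimage (coord m 0)) hx
  rintro y (hy | hy)
  · simpa using coord_zero_mem_Icc hs hy
  · have := coord_zero_mem_Icc hs hy
    simp only [map_neg, coord_zero_pt, Set.mem_Icc] at this ⊢
    constructor <;> linarith

end GammaOneBody

lemma sq_le_mul_add_one_of_le {m s : ℝ} (hs : 0 ≤ s) (h : s ≤ (m + √(m ^ 2 + 4)) / 2) :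
    s ^ 2 ≤ m * s + 1 := by
  have hsq := Real.sq_sqrt (show 0 ≤ m ^ 2 + 4 by positivity)
  have hm := le_of_abs_le (Real.abs_le_sqrt (show m ^ 2 ≤ m ^ 2 + 4 by linarith))
  -- the roots of `X ^ 2 - m X - 1` are `(m ± √(m ^ 2 + 4)) / 2`, and `s` lies between them
  nlinarith [mul_nonneg (sub_nonneg.mpr h) (show 0 ≤ s - (m - √(m ^ 2 + 4)) / 2 by linarith)]

open GammaOneBody in
theorem stmt_12 {n : ℕ} (hn : 2 ≤ n) (s : ℝ) (hs1 : 1 ≤ s)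
    (hs2 : s ≤ ((n:ℝ) - 1 + Real.sqrt (((n:ℝ) - 2) * n + 5)) / 2) :
    ∃ C : Set (EuclideanSpace ℝ (Fin n)), IsCompact C ∧ Convex ℝ C ∧
      (interior C).Nonempty ∧ MinkCentered C ∧ minkAsym C = s ∧
      OptCont (C ∩ -C) (convexHull ℝ (C ∪ -C)) := by
  obtain ⟨m, rfl⟩ : ∃ m, n = m + 1 := ⟨n - 1, by omega⟩
  have hm : 0 < m := by omega
  have hkey : s ^ 2 ≤ m * s + 1 := by
    refine sq_le_mul_add_one_of_le (by linarith) (hs2.trans_eq ?_)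
    push_cast
    ring_nf
  refine ⟨body m s, isCompact_body, convex_convexHull ℝ _, interior_body_nonempty (by linarith),
    ?_, minkAsym_body hm hs1 hkey, optCont_body hs1⟩
  rw [MinkCentered, minkAsym_body hm hs1 hkey]
  exact body_subset_smul_neg hs1
end

section
/- Let P = {x ∈ ℝ^n : |uᵢᵀx| ≤ tᵢ for i = 1, …, m} be a bounded 0-symmetric polytope with nonempty interior, where the uᵢ are unit vectors and 0 < t₁ ≤ t₂ ≤ … ≤ t_m, and suppose t₁·u₁ lies on the boundary of P. Then P° is optimally contained in (1/t₁²)·P. -/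
open Pointwise RealInnerProductSpace

variable {E : Type*} [NormedAddCommGroup E] [InnerProductSpace ℝ E]

theorem stmt_14 {n m : ℕ} (hm : 0 < m) (u : Fin m → EuclideanSpace ℝ (Fin n))
    (t : Fin m → ℝ) (hu : ∀ i, ‖u i‖ = 1) (ht0 : 0 < t ⟨0, hm⟩) (hmono : Monotone t)
    (P : Set (EuclideanSpace ℝ (Fin n)))
    (hP : P = {x | ∀ i, |(⟪u i, x⟫ : ℝ)| ≤ t i})
    (hbdd : Bornology.IsBounded P) (hint : (interior P).Nonempty)
    (hfr : t ⟨0, hm⟩ • u ⟨0, hm⟩ ∈ frontier P) :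
    OptCont (polarSet P) ((t ⟨0, hm⟩ ^ 2)⁻¹ • P) := by
  set i0 : Fin m := ⟨0, hm⟩ with hi0
  set t1 : ℝ := t i0 with ht1
  have ht1i : ∀ i, t1 ≤ t i := fun i => hmono (Fin.mk_le_of_le_val (Nat.zero_le _))
  have hti : ∀ i, 0 < t i := fun i => lt_of_lt_of_le ht0 (ht1i i)
  have huu : ∀ i j, |(⟪u i, u j⟫ : ℝ)| ≤ 1 := by
    intro i j
    calc |(⟪u i, u j⟫ : ℝ)| ≤ ‖u i‖ * ‖u j‖ := abs_real_inner_le_norm _ _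
    _ = 1 := by rw [hu i, hu j]; ring
  have key : ∀ (i : Fin m) (s : ℝ), |s| ≤ t1 ^ 2 / t i → s • u i ∈ P := by
    intro i s hs
    rw [hP]
    intro j
    rw [real_inner_smul_right, abs_mul]
    have h1 : t1 ^ 2 / t i ≤ t j := by
      have h2 := ht1i i
      have h3 := ht1i j
      have h4 := hti i
      rw [div_le_iff₀ (hti i)]
      nlinarith
    calc |s| * |(⟪u j, u i⟫ : ℝ)| ≤ (t1 ^ 2 / t i) * 1 := by
          apply mul_le_mul hs (huu j i) (abs_nonneg _)
          exact (div_pos (by positivity) (hti i)).le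
    _ ≤ t j := by linarith
  have hsnn : ∀ i : Fin m, (0:ℝ) ≤ t1 ^ 2 / t i := fun i => (div_pos (by positivity) (hti i)).le
  constructor
  · -- containment
    intro a ha
    rw [Set.mem_smul_set]
    refine ⟨(t1 ^ 2) • a, ?_, ?_⟩
    · rw [hP]
      intro i
      have hp := ha _ (key i (t1 ^ 2 / t i) (by rw [abs_of_nonneg (hsnn i)]))
      have hn := ha _ (key i (-(t1 ^ 2 / t i)) (by rw [abs_neg, abs_of_nonneg (hsnn i)]))
      rw [real_inner_smul_right] at hp hn
      rw [real_inner_smul_right, real_inner_comm]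
      set c := (⟪a, u i⟫ : ℝ)
      have hne : t i ≠ 0 := (hti i).ne'
      have heq : t1 ^ 2 / t i * c * t i = t1 ^ 2 * c := by field_simp
      have hp' : t1 ^ 2 * c ≤ t i := by
        have h := mul_le_mul_of_nonneg_right hp (hti i).le
        rw [one_mul, heq] at h; exact h
      have hn' : -(t1 ^ 2 * c) ≤ t i := by
        have h := mul_le_mul_of_nonneg_right hn (hti i).le
        rw [one_mul, neg_mul, neg_mul, heq] at h; linarith
      rw [abs_le]
      exact ⟨by linarith, hp'⟩
    · rw [smul_smul, inv_mul_cancel₀ (by positivity), one_smul]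
  · -- optimality
    rintro ⟨ρ, hρ0, hρ1, c, hsub⟩
    have hpolar : ∀ s : ℝ, |s| ≤ t1⁻¹ → s • u i0 ∈ polarSet P := by
      intro s hs x hx
      rw [hP] at hx
      have h0 := hx i0
      rw [real_inner_smul_left]
      calc s * ⟪u i0, x⟫ ≤ |s * ⟪u i0, x⟫| := le_abs_self _
      _ = |s| * |(⟪u i0, x⟫ : ℝ)| := abs_mul _ _
      _ ≤ t1⁻¹ * t1 := by
          apply mul_le_mul hs h0 (abs_nonneg _); positivity
      _ = 1 := by field_simp
    have hp := hsub (hpolar t1⁻¹ (by rw [abs_of_nonneg (by positivity)]))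
    have hn := hsub (hpolar (-t1⁻¹) (by rw [abs_neg, abs_of_nonneg (by positivity)]))
    rw [Set.mem_add] at hp hn
    obtain ⟨y, hy, c', hc', hyc⟩ := hp
    obtain ⟨z, hz, c'', hc'', hzc⟩ := hn
    rw [Set.mem_singleton_iff] at hc' hc''
    rw [hc'] at hyc
    rw [hc''] at hzc
    rw [Set.mem_smul_set] at hy hz
    obtain ⟨y', hy', rfl⟩ := hy
    obtain ⟨z', hz', rfl⟩ := hz
    rw [Set.mem_smul_set] at hy' hz'
    obtain ⟨p, hpP, rfl⟩ := hy'
    obtain ⟨q, hqP, rfl⟩ := hz'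
    rw [hP] at hpP hqP
    have hup := hpP i0
    have huq := hqP i0
    have hnorm : (⟪u i0, u i0⟫ : ℝ) = 1 := by
      rw [real_inner_self_eq_norm_sq, hu i0]; ring
    have e1 : ρ * ((t1 ^ 2)⁻¹ * ⟪u i0, p⟫) + ⟪u i0, c⟫ = t1⁻¹ := by
      have h : (⟪u i0, ρ • (t1 ^ 2)⁻¹ • p + c⟫ : ℝ) = ⟪u i0, t1⁻¹ • u i0⟫ := by rw [hyc]
      rw [inner_add_right, real_inner_smul_right, real_inner_smul_right,
        real_inner_smul_right, hnorm, mul_one] at h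
      exact h
    have e2 : ρ * ((t1 ^ 2)⁻¹ * ⟪u i0, q⟫) + ⟪u i0, c⟫ = -t1⁻¹ := by
      have h : (⟪u i0, ρ • (t1 ^ 2)⁻¹ • q + c⟫ : ℝ) = ⟪u i0, (-t1⁻¹) • u i0⟫ := by rw [hzc]
      rw [inner_add_right, real_inner_smul_right, real_inner_smul_right,
        real_inner_smul_right, hnorm, mul_one] at h
      exact h
    set A := (⟪u i0, p⟫ : ℝ)
    set B := (⟪u i0, q⟫ : ℝ)
    have habs1 : A ≤ t1 := (abs_le.mp hup).2
    have habs2 : -t1 ≤ B := (abs_le.mp huq).1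
    have ht1ne : t1 ≠ 0 := ht0.ne'
    have e3 : ρ * ((t1 ^ 2)⁻¹ * A) - ρ * ((t1 ^ 2)⁻¹ * B) = 2 * t1⁻¹ := by linarith
    have e4 : ρ * (A - B) = 2 * t1 := by
      have ht2 : (t1 ^ 2 : ℝ) ≠ 0 := by positivity
      field_simp at e3
      nlinarith [e3, sq_nonneg t1]
    have hAB : A - B ≤ 2 * t1 := by linarith
    nlinarith [mul_le_mul_of_nonneg_left hAB hρ0]
end

section
/- Let n be odd and let S = conv{p¹, …, p^{n+1}} ⊂ ℝ^n be a regular n-simplex with vertices satisfying ‖pⁱ‖ = 1 for all i, p¹ + … + p^{n+1} = 0, and (pⁱ)ᵀpʲ = −1/n for all i ≠ j. Then S ∩ (−S) is optimally contained in conv(S ∪ (−S)). -/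
open Pointwise RealInnerProductSpace

variable {E : Type*} [NormedAddCommGroup E] [InnerProductSpace ℝ E]

theorem stmt_16 {n : ℕ} (hn : Odd n) (p : Fin (n + 1) → EuclideanSpace ℝ (Fin n))
    (hnorm : ∀ i, ‖p i‖ = 1) (hsum : ∑ i, p i = 0)
    (hip : ∀ i j, i ≠ j → (⟪p i, p j⟫ : ℝ) = -1 / n)
    (S : Set (EuclideanSpace ℝ (Fin n))) (hS : S = convexHull ℝ (Set.range p)) :
    OptCont (S ∩ -S) (convexHull ℝ (S ∪ -S)) := by
  obtain ⟨m, rfl⟩ := hn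
  have hm1 : ((m:ℝ) + 1) ≠ 0 := by positivity
  have h2m : (2*(m:ℝ) + 1) ≠ 0 := by positivity
  have hip' : ∀ i j, i ≠ j → ⟪p i, p j⟫ = -1 / (2*(m:ℝ)+1) := by
    intro i j hij
    have h := hip i j hij
    push_cast at h
    convert h using 2
  set A : Finset (Fin (2*m+1+1)) := Finset.Iio ⟨m+1, by omega⟩ with hA
  have cardA : A.card = m + 1 := by simp [hA]
  have cardAc : Aᶜ.card = m + 1 := by
    rw [Finset.card_compl, cardA]
    simp
    omega
  have hAc : ∑ i ∈ Aᶜ, p i = -∑ i ∈ A, p i := by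
    have hsplit : ∑ i ∈ A, p i + ∑ i ∈ Aᶜ, p i = 0 := by
      rw [Finset.sum_add_sum_compl]; exact hsum
    exact eq_neg_of_add_eq_zero_right hsplit
  -- inner products of half-sums with vertices
  have hinner : ∀ (B : Finset (Fin (2*m+1+1))), B.card = m+1 → ∀ j,
      ⟪∑ i ∈ B, p i, p j⟫ = if j ∈ B then ((m:ℝ)+1)/(2*(m:ℝ)+1) else -(((m:ℝ)+1)/(2*(m:ℝ)+1)) := by
    intro B hB j
    rw [sum_inner]
    by_cases hj : j ∈ B
    · rw [if_pos hj, ← Finset.add_sum_erase _ _ hj]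
      have h1 : ⟪p j, p j⟫ = 1 := by
        rw [real_inner_self_eq_norm_sq, hnorm]; norm_num
      have h2 : ∑ i ∈ B.erase j, ⟪p i, p j⟫ = (m:ℝ) * (-1/(2*(m:ℝ)+1)) := by
        rw [Finset.sum_congr rfl (fun i hi => hip' i j (Finset.ne_of_mem_erase hi)),
            Finset.sum_const, Finset.card_erase_of_mem hj, hB]
        simp [nsmul_eq_mul]
      rw [h1, h2]
      field_simp
      ring
    · rw [if_neg hj]
      have h2 : ∀ i ∈ B, ⟪p i, p j⟫ = -1/(2*(m:ℝ)+1) :=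
        fun i hi => hip' i j (by rintro rfl; exact hj hi)
      rw [Finset.sum_congr rfl h2, Finset.sum_const, hB]
      push_cast [nsmul_eq_mul]
      field_simp
  -- half-sum averages are in S
  have hmem : ∀ (B : Finset (Fin (2*m+1+1))), B.card = m+1 →
      ((m:ℝ)+1)⁻¹ • ∑ i ∈ B, p i ∈ S := by
    intro B hB
    rw [hS]
    have h := Finset.centerMass_mem_convexHull B (w := fun _ => (1:ℝ))
      (fun i _ => zero_le_one) (by rw [Finset.sum_const, hB]; push_cast [nsmul_eq_mul]; positivity)
      (z := p) (fun i _ => Set.mem_range_self i)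
    rw [Finset.centerMass, Finset.sum_const, hB] at h
    simpa [nsmul_eq_mul] using h
  set x : EuclideanSpace ℝ (Fin (2*m+1)) := ((m:ℝ)+1)⁻¹ • ∑ i ∈ A, p i with hx
  set a : EuclideanSpace ℝ (Fin (2*m+1)) := (2*(m:ℝ)+1) • x with ha
  have hnegx : -x = ((m:ℝ)+1)⁻¹ • ∑ i ∈ Aᶜ, p i := by
    rw [hAc, smul_neg, ← hx]
  have hxS : x ∈ S := hmem A cardA
  have hnxS : -x ∈ S := by rw [hnegx]; exact hmem Aᶜ cardAc
  have ha_p : ∀ j, ⟪a, p j⟫ = if j ∈ A then (1:ℝ) else -1 := by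
    intro j
    rw [ha, hx, smul_smul, real_inner_smul_left, hinner A cardA j]
    by_cases hj : j ∈ A <;> simp [hj] <;> field_simp
  have hax : ⟪a, x⟫ = 1 := by
    have h : ⟪a, x⟫ = ((m:ℝ)+1)⁻¹ * ∑ j ∈ A, ⟪a, p j⟫ := by
      rw [hx, real_inner_smul_right, inner_sum]
    rw [h, Finset.sum_congr rfl (fun j hj => by rw [ha_p j, if_pos hj]),
        Finset.sum_const, cardA]
    push_cast [nsmul_eq_mul]
    field_simp
  -- bound on the hull
  have hbound : ∀ c ∈ convexHull ℝ (S ∪ -S), |⟪a, c⟫| ≤ 1 := by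
    have hlin : IsLinearMap ℝ (fun v : EuclideanSpace ℝ (Fin (2*m+1)) => ⟪a, v⟫) :=
      ⟨fun u v => inner_add_right a u v, fun r u => by
        rw [real_inner_smul_right, smul_eq_mul]⟩
    have hconv : Convex ℝ {v : EuclideanSpace ℝ (Fin (2*m+1)) | |⟪a, v⟫| ≤ 1} := by
      have h := (convex_halfSpace_le hlin 1).inter (convex_halfSpace_ge hlin (-1))
      have he : {v : EuclideanSpace ℝ (Fin (2*m+1)) | |⟪a, v⟫| ≤ 1} =
          {v | ⟪a, v⟫ ≤ 1} ∩ {v | -1 ≤ ⟪a, v⟫} := by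
        ext v; simp [abs_le, and_comm]
      rw [he]; exact h
    have hrange : Set.range p ⊆ {v | |⟪a, v⟫| ≤ 1} := by
      rintro _ ⟨j, rfl⟩
      simp only [Set.mem_setOf_eq, ha_p j]
      split_ifs <;> norm_num
    have hSsub : S ⊆ {v | |⟪a, v⟫| ≤ 1} := hS ▸ convexHull_min hrange hconv
    have hnSsub : -S ⊆ {v | |⟪a, v⟫| ≤ 1} := by
      intro v hv
      have h := hSsub (Set.mem_neg.mp hv)
      simpa [inner_neg_right, abs_neg] using h
    exact fun c hc => convexHull_min (Set.union_subset hSsub hnSsub) hconv hc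
  constructor
  · exact Set.inter_subset_left.trans (Set.subset_union_left.trans (subset_convexHull ℝ _))
  · rintro ⟨ρ, hρ0, hρ1, t, hsub⟩
    have hx1 : x ∈ S ∩ -S := ⟨hxS, Set.mem_neg.mpr hnxS⟩
    have hx2 : -x ∈ S ∩ -S := ⟨hnxS, Set.mem_neg.mpr (by simpa using hxS)⟩
    obtain ⟨u1, hu1, v1, hv1, huv1⟩ := Set.mem_add.mp (hsub hx1)
    obtain ⟨u2, hu2, v2, hv2, huv2⟩ := Set.mem_add.mp (hsub hx2)
    obtain ⟨c1, hc1, rfl⟩ := Set.mem_smul_set.mp hu1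
    obtain ⟨c2, hc2, rfl⟩ := Set.mem_smul_set.mp hu2
    rw [Set.mem_singleton_iff] at hv1 hv2
    rw [hv1] at huv1; rw [hv2] at huv2
    have e1 : ρ * ⟪a, c1⟫ + ⟪a, t⟫ = 1 := by
      have h : ⟪a, ρ • c1 + t⟫ = ⟪a, x⟫ := by rw [huv1]
      rw [inner_add_right, real_inner_smul_right, hax] at h
      exact h
    have e2 : ρ * ⟪a, c2⟫ + ⟪a, t⟫ = -1 := by
      have h : ⟪a, ρ • c2 + t⟫ = ⟪a, -x⟫ := by rw [huv2]
      rw [inner_add_right, real_inner_smul_right, inner_neg_right, hax] at h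
      exact h
    have b1 := abs_le.mp (hbound c1 hc1)
    have b2 := abs_le.mp (hbound c2 hc2)
    nlinarith [b1.1, b1.2, b2.1, b2.2]
end

section
/- Let n be even and let S = conv{p¹, …, p^{n+1}} ⊂ ℝ^n be a regular n-simplex with vertices satisfying ‖pⁱ‖ = 1 for all i, p¹ + … + p^{n+1} = 0, and (pⁱ)ᵀpʲ = −1/n for all i ≠ j. Then S ∩ (−S) is optimally contained in (n/(n+1))·conv(S ∪ (−S)). -/
open Pointwise RealInnerProductSpace

variable {E : Type*} [NormedAddCommGroup E] [InnerProductSpace ℝ E]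

/-!
Barycentric coordinates together with the Gram relations `⟪pᵢ, pⱼ⟫ = -1/n` identify `S ∩ -S`
with the points `(n+1)⁻¹ • ∑ tᵢ • pᵢ` where `|tᵢ| ≤ 1` and `∑ tᵢ = 0`. For such `t` the sum
`∑ |tᵢ|` is twice the mass of either sign class, and for `n` even one of the two classes has at
most `n/2` members, so `∑ |tᵢ| ≤ n`; this places `S ∩ -S` in `n/(n+1) • conv(S ∪ -S)`.
For optimality take `e = (1, -1, …, 1, -1, 0)` and `u = ∑ eᵢ • pᵢ`: the functional `⟪u, ·⟫` has
absolute value at most `1` on the container and takes the values `±1` at `±(n+1)⁻¹ • u ∈ S ∩ -S`,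
so no smaller homothet of the container covers `S ∩ -S`.
-/

open Finset

section Convex

variable {V ι : Type*} [AddCommGroup V] [Module ℝ V] [Fintype ι]

theorem convexHull_range_eq_image_stdSimplex (v : ι → V) :
    convexHull ℝ (Set.range v) = Fintype.linearCombination ℝ v '' stdSimplex ℝ ι := by
  classical
  rw [← convexHull_rangle_single_eq_stdSimplex, LinearMap.image_convexHull, ← Set.range_comp]
  congr 1
  ext i
  simp

theorem convexHull_convexHull_union_neg_eq_absConvexHull (A : Set V) :
    convexHull ℝ (convexHull ℝ A ∪ -convexHull ℝ A) = absConvexHull ℝ A := by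
  rw [← convexHull_neg, convexHull_convexHull_union_left, convexHull_convexHull_union_right,
    convexHull_union_neg_eq_absConvexHull]

theorem AbsConvex.sum_smul_mem {A : Set V} (hA : AbsConvex ℝ A) (h0 : (0 : V) ∈ A)
    {t : ι → ℝ} {z : ι → V} (ht : ∑ i, |t i| ≤ 1) (hz : ∀ i, z i ∈ A) :
    ∑ i, t i • z i ∈ A := by
  -- a convex combination of `0` and the points `sign (t i) • z i ∈ A` with weights `|t i|`
  have hsign : ∀ i, (SignType.sign (t i) : ℝ) • z i ∈ A := fun i =>
    hA.1 _ (by rcases (SignType.sign (t i)) with _ | _ | _ <;> simp) (Set.smul_mem_smul_set (hz i))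
  have h := hA.2.sum_mem (t := Finset.univ) (w := fun o => Option.elim o (1 - ∑ i, |t i|) (|t ·|))
    (z := fun o => Option.elim o 0 fun i => (SignType.sign (t i) : ℝ) • z i)
    (by rintro (_ | i) - <;> simp [ht]) (by simp [Fintype.sum_option])
    (by rintro (_ | i) - <;> simp [h0, hsign])
  simpa [Fintype.sum_option, smul_smul] using h

theorem abs_le_of_mem_absConvexHull (f : V →ₗ[ℝ] ℝ) {A : Set V} {c : ℝ}
    (hA : ∀ x ∈ A, |f x| ≤ c) {x : V} (hx : x ∈ absConvexHull ℝ A) : |f x| ≤ c := by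
  rw [← convexHull_union_neg_eq_absConvexHull] at hx
  refine abs_le.mpr <| convexHull_min ?_ ((convex_Icc (-c) c).linear_preimage f) hx
  rintro y (hy | hy)
  · exact abs_le.mp (hA y hy)
  · exact abs_le.mp (by simpa using hA (-y) hy)

theorem inv_card_smul_sum_smul_mem_convexHull [Nonempty ι] {v : ι → V} (hv : ∑ i, v i = 0)
    {t : ι → ℝ} (ht : ∀ i, -1 ≤ t i) (ht0 : ∑ i, t i = 0) :
    (Fintype.card ι : ℝ)⁻¹ • ∑ i, t i • v i ∈ convexHull ℝ (Set.range v) := by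
  have hN : (Fintype.card ι : ℝ) ≠ 0 := by positivity
  rw [convexHull_range_eq_image_stdSimplex]
  refine ⟨fun i => (1 + t i) / Fintype.card ι,
    ⟨fun i => div_nonneg (by linarith [ht i]) (Nat.cast_nonneg _), ?_⟩, ?_⟩
  · rw [← sum_div, sum_add_distrib, ht0]
    simp [hN]
  · simp [Fintype.linearCombination_apply, add_smul, sum_add_distrib, div_eq_inv_mul,
      mul_smul, ← smul_sum, hv]

end Convex

theorem sum_abs_le_of_abs_le_one_of_sum_eq_zero {ι : Type*} [Fintype ι] {t : ι → ℝ}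
    (ht : ∀ i, |t i| ≤ 1) (ht0 : ∑ i, t i = 0) :
    ∑ i, |t i| ≤ 2 * (Fintype.card ι / 2 : ℕ) := by
  classical
  set P := univ.filter (fun i => 0 < t i)
  have hpos : ∑ i ∈ P, |t i| = ∑ i ∈ P, t i :=
    sum_congr rfl fun i hi => abs_of_pos (mem_filter.mp hi).2
  have hneg : ∑ i ∈ Pᶜ, |t i| = -∑ i ∈ Pᶜ, t i := by
    rw [← sum_neg_distrib]
    exact sum_congr rfl fun i hi => abs_of_nonpos (by simpa [P] using hi)
  have hsplit : ∑ i ∈ P, t i + ∑ i ∈ Pᶜ, t i = 0 := by rw [sum_add_sum_compl]; exact ht0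
  have hP : ∑ i ∈ P, t i ≤ #P := by
    simpa using sum_le_card_nsmul P t 1 fun i _ => (abs_le.mp (ht i)).2
  have hQ : -∑ i ∈ Pᶜ, t i ≤ #Pᶜ := by
    simpa [← sum_neg_distrib] using sum_le_card_nsmul Pᶜ (-t) 1 fun i _ =>
      neg_le.mp (abs_le.mp (ht i)).1
  have hcard : #P + #Pᶜ = Fintype.card ι := card_add_card_compl P
  rw [← sum_add_sum_compl P, hpos, hneg]
  rcases le_total #P #Pᶜ with h | h
  · have : #P ≤ Fintype.card ι / 2 := by omega
    have : (#P : ℝ) ≤ (Fintype.card ι / 2 : ℕ) := by exact_mod_cast this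
    linarith
  · have : #Pᶜ ≤ Fintype.card ι / 2 := by omega
    have : (#Pᶜ : ℝ) ≤ (Fintype.card ι / 2 : ℕ) := by exact_mod_cast this
    linarith

theorem exists_abs_le_one_sum_eq_zero_sum_sq_eq {n : ℕ} (hn : Even n) :
    ∃ e : Fin (n + 1) → ℝ, (∀ i, |e i| ≤ 1) ∧ ∑ i, e i = 0 ∧ ∑ i, e i ^ 2 = n := by
  refine ⟨Fin.lastCases 0 fun i : Fin n => (-1) ^ (i : ℕ), fun i => ?_, ?_, ?_⟩
  · induction i using Fin.lastCases <;> simp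
  · simp [Fin.sum_univ_castSucc, Fin.sum_univ_eq_sum_range (fun i => (-1 : ℝ) ^ i),
      neg_one_geom_sum, hn]
  · simp [Fin.sum_univ_castSucc, ← pow_mul]

theorem optCont_of_abs_le_one {K C : Set E} (hKC : K ⊆ C) (f : E →ₗ[ℝ] ℝ)
    (hC : ∀ y ∈ C, |f y| ≤ 1) {a : E} (ha : a ∈ K) (hna : -a ∈ K) (hfa : f a = 1) :
    OptCont K C := by
  -- `K` has width `2` in the direction `f`, while `ρ • C + {t}` has width at most `2 * ρ`
  refine ⟨hKC, ?_⟩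
  rintro ⟨ρ, hρ0, hρ1, t, hK⟩
  have hwidth : ∀ x ∈ K, |f x - f t| ≤ ρ := by
    intro x hx
    obtain ⟨_, ⟨y, hy, rfl⟩, _, rfl, rfl⟩ := hK hx
    rw [map_add, map_smul, smul_eq_mul, add_sub_cancel_right, abs_mul, abs_of_nonneg hρ0]
    exact mul_le_of_le_one_right hρ0 (hC y hy)
  have h₁ := abs_le.mp (hwidth a ha)
  have h₂ := abs_le.mp (hwidth (-a) hna)
  rw [map_neg, hfa] at h₂
  rw [hfa] at h₁
  linarith [h₁.2, h₂.1]

structure IsCenteredRegularSimplex {n : ℕ} (p : Fin (n + 1) → E) : Prop where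
  norm_eq_one : ∀ i, ‖p i‖ = 1
  sum_eq_zero : ∑ i, p i = 0
  inner_eq : ∀ i j, i ≠ j → ⟪p i, p j⟫ = -1 / n

namespace IsCenteredRegularSimplex

variable {n : ℕ} {p : Fin (n + 1) → E}

theorem ne_zero (hp : IsCenteredRegularSimplex p) : n ≠ 0 := by
  rintro rfl
  have h := hp.norm_eq_one 0
  rw [show p 0 = 0 by simpa using hp.sum_eq_zero, norm_zero] at h
  exact zero_ne_one h

theorem inner_sum_smul (hp : IsCenteredRegularSimplex p) (c : Fin (n + 1) → ℝ)
    (i : Fin (n + 1)) :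
    ⟪p i, ∑ j, c j • p j⟫ = ((n + 1) * c i - ∑ j, c j) / n := by
  have hn : (n : ℝ) ≠ 0 := Nat.cast_ne_zero.mpr hp.ne_zero
  have hoff : ∀ j ∈ univ.erase i, ⟪p i, c j • p j⟫ = c j * (-1 / n) := fun j hj => by
    rw [real_inner_smul_right, hp.inner_eq i j (ne_of_mem_erase hj).symm]
  rw [inner_sum, ← add_sum_erase _ _ (mem_univ i), sum_congr rfl hoff, ← sum_mul,
    sum_erase_eq_sub (mem_univ i), real_inner_smul_right, real_inner_self_eq_norm_sq,
    hp.norm_eq_one]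
  field_simp
  ring

theorem mem_inter_neg_iff (hp : IsCenteredRegularSimplex p) {x : E} :
    x ∈ convexHull ℝ (Set.range p) ∩ -convexHull ℝ (Set.range p) ↔
      ∃ t : Fin (n + 1) → ℝ, (∀ i, |t i| ≤ 1) ∧ ∑ i, t i = 0 ∧
        ((n : ℝ) + 1)⁻¹ • ∑ i, t i • p i = x := by
  constructor
  · rintro ⟨hx, hnx⟩
    rw [convexHull_range_eq_image_stdSimplex] at hx hnx
    obtain ⟨l, ⟨hl0, hl1⟩, rfl⟩ := hx
    obtain ⟨m, ⟨hm0, hm1⟩, hm⟩ := Set.mem_neg.mp hnx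
    simp only [Fintype.linearCombination_apply] at hm ⊢
    have hn : (n : ℝ) ≠ 0 := Nat.cast_ne_zero.mpr hp.ne_zero
    have hlm : ∀ i, (n + 1) * l i + (n + 1) * m i = 2 := fun i => by
      have h := hp.inner_sum_smul m i
      rw [hm, inner_neg_right, hp.inner_sum_smul l i, hl1, hm1] at h
      field_simp at h
      linarith
    refine ⟨fun i => (n + 1) * l i - 1, fun i => abs_le.mpr ⟨?_, ?_⟩, ?_, ?_⟩
    · nlinarith [hl0 i, (n.cast_nonneg : (0 : ℝ) ≤ n)]
    · nlinarith [hm0 i, hlm i]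
    · simp [sum_sub_distrib, ← mul_sum, hl1]
    · have hn1 : (n : ℝ) + 1 ≠ 0 := by positivity
      simp only [sub_smul, sum_sub_distrib, one_smul, hp.sum_eq_zero, sub_zero, smul_sum,
        smul_smul, inv_mul_cancel_left₀ hn1]
  · rintro ⟨t, ht, ht0, rfl⟩
    have hN : (Fintype.card (Fin (n + 1)) : ℝ) = n + 1 := by simp
    refine ⟨?_, ?_⟩
    · rw [← hN]
      exact inv_card_smul_sum_smul_mem_convexHull hp.sum_eq_zero
        (fun i => (abs_le.mp (ht i)).1) ht0
    · rw [Set.mem_neg, ← hN, ← smul_neg, ← sum_neg_distrib]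
      simp_rw [← neg_smul]
      exact inv_card_smul_sum_smul_mem_convexHull hp.sum_eq_zero
        (fun i => neg_le_neg (abs_le.mp (ht i)).2) (by simp [ht0])

theorem inter_neg_subset (hp : IsCenteredRegularSimplex p) (hn : Even n) :
    convexHull ℝ (Set.range p) ∩ -convexHull ℝ (Set.range p) ⊆
      ((n : ℝ) / (n + 1)) • absConvexHull ℝ (Set.range p) := by
  intro x hx
  obtain ⟨t, ht, ht0, rfl⟩ := hp.mem_inter_neg_iff.mp hx
  have hn0 : (n : ℝ) ≠ 0 := mod_cast hp.ne_zero
  have habs : ∑ i, |t i| ≤ n := by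
    have h := sum_abs_le_of_abs_le_one_of_sum_eq_zero ht ht0
    obtain ⟨k, rfl⟩ := hn
    rw [Fintype.card_fin, show (k + k + 1) / 2 = k by omega] at h
    push_cast
    linarith
  refine ⟨∑ i, (t i / n) • p i, absConvex_absConvexHull.sum_smul_mem zero_mem_absConvexHull ?_
    fun i => subset_absConvexHull ⟨i, rfl⟩, ?_⟩
  · simp_rw [abs_div, Nat.abs_cast, ← sum_div]
    exact div_le_one_of_le₀ habs (Nat.cast_nonneg _)
  · simp only [smul_sum, smul_smul]
    congr 1
    ext i
    field_simp

theorem optCont_inter_neg (hp : IsCenteredRegularSimplex p) (hn : Even n) :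
    OptCont (convexHull ℝ (Set.range p) ∩ -convexHull ℝ (Set.range p))
      (((n : ℝ) / (n + 1)) • convexHull ℝ
        (convexHull ℝ (Set.range p) ∪ -convexHull ℝ (Set.range p))) := by
  rw [convexHull_convexHull_union_neg_eq_absConvexHull]
  have hn0 : (n : ℝ) ≠ 0 := mod_cast hp.ne_zero
  obtain ⟨e, he, he0, he2⟩ := exists_abs_le_one_sum_eq_zero_sum_sq_eq hn
  set u := ∑ i, e i • p i
  have hpu : ∀ j, ⟪p j, u⟫ = (n + 1) / n * e j := fun j => by
    rw [hp.inner_sum_smul, he0]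
    ring
  have ha := hp.mem_inter_neg_iff.mpr ⟨e, he, he0, rfl⟩
  refine optCont_of_abs_le_one (hp.inter_neg_subset hn) (innerₗ E u) ?_ ha
    ⟨ha.2, by simpa using ha.1⟩ ?_
  · rintro _ ⟨z, hz, rfl⟩
    have hbound : |innerₗ E u z| ≤ (n + 1) / n := by
      refine abs_le_of_mem_absConvexHull _ ?_ hz
      rintro _ ⟨j, rfl⟩
      rw [innerₗ_apply_apply, real_inner_comm, hpu, abs_mul, abs_of_pos (by positivity)]
      exact mul_le_of_le_one_right (by positivity) (he j)
    rw [map_smul, smul_eq_mul, abs_mul, abs_of_pos (by positivity)]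
    calc (n : ℝ) / (n + 1) * |innerₗ E u z| ≤ n / (n + 1) * ((n + 1) / n) := by gcongr
      _ = 1 := by field_simp
  · have huu : ⟪u, u⟫ = (n + 1) / n * ∑ i, e i ^ 2 := by
      change ⟪∑ i, e i • p i, u⟫ = _
      simp only [sum_inner, real_inner_smul_left, hpu, mul_sum]
      exact sum_congr rfl fun i _ => by ring
    rw [innerₗ_apply_apply, real_inner_smul_right, huu, he2]
    field_simp

end IsCenteredRegularSimplex

theorem stmt_17 {n : ℕ} (hn : Even n) (p : Fin (n + 1) → EuclideanSpace ℝ (Fin n))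
    (hnorm : ∀ i, ‖p i‖ = 1) (hsum : ∑ i, p i = 0)
    (hip : ∀ i j, i ≠ j → (⟪p i, p j⟫ : ℝ) = -1 / n)
    (S : Set (EuclideanSpace ℝ (Fin n))) (hS : S = convexHull ℝ (Set.range p)) :
    OptCont (S ∩ -S) (((n : ℝ) / (n + 1)) • convexHull ℝ (S ∪ -S)) := by
  subst hS
  exact IsCenteredRegularSimplex.optCont_inter_neg ⟨hnorm, hsum, hip⟩ hn
end

section
/- Let C be a Minkowski centered convex body in ℝ^n such that C ∩ (−C) is optimally contained in conv(C ∪ (−C)). Then for every s ∈ [1, s(C)] there exists a Minkowski centered convex body C_s in ℝ^n with s(C_s) = s such that C_s ∩ (−C_s) is optimally contained in conv(C_s ∪ (−C_s)). -/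
open Pointwise RealInnerProductSpace

variable {E : Type*} [NormedAddCommGroup E] [InnerProductSpace ℝ E]

/-!
Take `C_s = C ∩ s • -C`. Minkowski centeredness of `C` gives `(s / s(C)) • C ⊆ C_s ⊆ C`,
and star-convexity gives `C_s ⊆ s • -C_s`; any translate `ρ • -C_s + d` containing `C_s`
rescales to a translate of `(ρ s(C) / s) • -C` containing `C`, so `s(C_s) = s`. For `s ≥ 1`
the set `C_s` still contains `C ∩ -C`, so `C_s ∩ -C_s = C ∩ -C`, while
`conv (C_s ∪ -C_s) ⊆ conv (C ∪ -C)`; optimal containment survives shrinking the container.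
-/

open Set

section StarConvex

variable {V : Type*} [AddCommGroup V] [Module ℝ V] {C : Set V} {s : ℝ}

lemma StarConvex.inter_smul_neg_subset_smul_neg (hC : StarConvex ℝ 0 C) (hs : 1 ≤ s) :
    C ∩ s • -C ⊆ s • -(C ∩ s • -C) := by
  have hs₀ : s ≠ 0 := by positivity
  rw [inter_neg, smul_set_inter₀ hs₀, smul_set_neg, neg_neg, smul_smul]
  exact fun x hx => ⟨hx.2, hC.mem_smul hx.1 (one_le_mul_of_one_le_of_one_le hs hs)⟩

lemma StarConvex.inter_smul_neg_inter_neg (hC : StarConvex ℝ 0 C) (hs : 1 ≤ s) :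
    (C ∩ s • -C) ∩ -(C ∩ s • -C) = C ∩ -C := by
  have hneg : StarConvex ℝ 0 (-C) := neg_zero (G := V) ▸ hC.neg
  have hsub : ∀ x ∈ C ∩ -C, x ∈ s • -C := fun x hx => hneg.mem_smul hx.2 hs
  ext x
  simp only [mem_inter_iff, mem_neg]
  refine ⟨fun h => ⟨h.1.1, h.2.1⟩, fun h => ⟨⟨h.1, hsub x h⟩, h.2, ?_⟩⟩
  exact hsub (-x) ⟨h.2, by simpa using h.1⟩

end StarConvex

lemma OptCont.of_subset {K C D : Set E} (h : OptCont K C) (hKD : K ⊆ D) (hDC : D ⊆ C) :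
    OptCont K D :=
  ⟨hKD, fun ⟨ρ, hρ₀, hρ₁, t, hK⟩ =>
    h.2 ⟨ρ, hρ₀, hρ₁, t, hK.trans (add_subset_add_right (smul_set_mono hDC))⟩⟩

lemma sub_singleton_subset_smul_iff (C : Set E) (c : E) (ρ : ℝ) :
    C - {c} ⊆ ρ • ({c} - C) ↔ C ⊆ ρ • -C + {(1 + ρ) • c} := by
  rw [sub_singleton, image_subset_iff]
  refine forall₂_congr fun x _ => ?_
  simp only [mem_preimage, add_singleton, mem_image, mem_smul_set, mem_neg,
    singleton_sub]
  constructor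
  · rintro ⟨_, ⟨y, hy, rfl⟩, h⟩
    exact ⟨_, ⟨-y, by simpa using hy, rfl⟩, by rw [← sub_add_cancel x c, ← h]; module⟩
  · rintro ⟨_, ⟨y, hy, rfl⟩, h⟩
    exact ⟨_, ⟨-y, hy, rfl⟩, by rw [← h]; module⟩

lemma minkAsym_eq_sInf (C : Set E) :
    minkAsym C = sInf {ρ : ℝ | 0 < ρ ∧ ∃ d : E, C ⊆ ρ • -C + {d}} := by
  refine congrArg sInf (ext fun ρ => and_congr_right fun hρ => ?_)
  simp only [sub_singleton_subset_smul_iff]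
  have hρ₁ : 1 + ρ ≠ 0 := by positivity
  exact ⟨fun ⟨c, h⟩ => ⟨_, h⟩,
    fun ⟨d, h⟩ => ⟨(1 + ρ)⁻¹ • d, by rwa [smul_inv_smul₀ hρ₁]⟩⟩

lemma minkAsym_le {C : Set E} {ρ : ℝ} {d : E} (hρ : 0 < ρ) (h : C ⊆ ρ • -C + {d}) :
    minkAsym C ≤ ρ :=
  minkAsym_eq_sInf C ▸ csInf_le ⟨0, fun _ hρ' => hρ'.1.le⟩ ⟨hρ, d, h⟩

lemma mul_minkAsym_le {C D : Set E} {μ ρ : ℝ} {d : E} (hμ : 0 < μ) (hCD : μ • C ⊆ D)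
    (hDC : D ⊆ C) (hρ : 0 < ρ) (hD : D ⊆ ρ • -D + {d}) : μ * minkAsym C ≤ ρ := by
  have hC : μ • C ⊆ ρ • -C + {d} :=
    hCD.trans (hD.trans (add_subset_add_right (smul_set_mono (neg_subset_neg.2 hDC))))
  have hC' : C ⊆ (ρ / μ) • -C + {μ⁻¹ • d} := by
    rwa [smul_set_subset_iff₀ hμ.ne', smul_add, smul_set_singleton, smul_smul,
      inv_mul_eq_div] at hC
  rw [← le_div_iff₀' hμ]
  exact minkAsym_le (div_pos hρ hμ) hC'

namespace MinkCentered

variable {C : Set E} (hmc : MinkCentered C)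
include hmc

lemma zero_mem_interior (hconv : Convex ℝ C) (hint : (interior C).Nonempty)
    (hσ : 0 < minkAsym C) : (0 : E) ∈ interior C := by
  set σ := minkAsym C
  obtain ⟨x, hx⟩ := hint
  have hx' : -σ⁻¹ • x ∈ C := by
    have := hmc (interior_subset hx)
    rwa [mem_smul_set_iff_inv_smul_mem₀ hσ.ne', mem_neg, ← neg_smul] at this
  have := hconv.combo_interior_self_mem_interior hx hx' (a := 1 / (1 + σ)) (b := σ / (1 + σ))
    (by positivity) (by positivity) (by field_simp)
  convert this using 1
  match_scalars
  field_simp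
  ring

lemma smul_subset_inter_smul_neg (hC : StarConvex ℝ 0 C) {s : ℝ} (hs : 0 < s)
    (hsσ : s ≤ minkAsym C) : (s / minkAsym C) • C ⊆ C ∩ s • -C := by
  have hσ : 0 < minkAsym C := hs.trans_le hsσ
  refine subset_inter ?_ ?_
  · rintro _ ⟨x, hx, rfl⟩
    exact hC.smul_mem hx (div_pos hs hσ).le (div_le_one_of_le₀ hsσ hσ.le)
  · calc (s / minkAsym C) • C ⊆ (s / minkAsym C) • minkAsym C • -C := smul_set_mono hmc
      _ = s • -C := by rw [smul_smul, div_mul_cancel₀ s hσ.ne']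

lemma minkAsym_inter_smul_neg (hC : StarConvex ℝ 0 C) {s : ℝ} (hs : 1 ≤ s)
    (hsσ : s ≤ minkAsym C) : minkAsym (C ∩ s • -C) = s := by
  have hs₀ : 0 < s := by positivity
  have hsub : C ∩ s • -C ⊆ s • -(C ∩ s • -C) + {0} := by
    simpa using hC.inter_smul_neg_subset_smul_neg hs
  refine (minkAsym_le hs₀ hsub).antisymm ?_
  rw [minkAsym_eq_sInf]
  refine le_csInf ⟨s, hs₀, 0, hsub⟩ fun ρ ⟨hρ, d, hd⟩ => ?_
  have hσ : 0 < minkAsym C := hs₀.trans_le hsσ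
  have := mul_minkAsym_le (div_pos hs₀ hσ) (hmc.smul_subset_inter_smul_neg hC hs₀ hsσ)
    inter_subset_left hρ hd
  rwa [div_mul_cancel₀ s hσ.ne'] at this

end MinkCentered

theorem stmt_19 {n : ℕ} (C : Set (EuclideanSpace ℝ (Fin n)))
    (hcomp : IsCompact C) (hconv : Convex ℝ C) (hint : (interior C).Nonempty)
    (hmc : MinkCentered C)
    (hopt : OptCont (C ∩ -C) (convexHull ℝ (C ∪ -C))) :
    ∀ s : ℝ, 1 ≤ s → s ≤ minkAsym C →
      ∃ Cs : Set (EuclideanSpace ℝ (Fin n)), IsCompact Cs ∧ Convex ℝ Cs ∧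
        (interior Cs).Nonempty ∧ MinkCentered Cs ∧ minkAsym Cs = s ∧
        OptCont (Cs ∩ -Cs) (convexHull ℝ (Cs ∪ -Cs)) := by
  intro s hs hsσ
  have hσ : 0 < minkAsym C := by linarith
  have h0 : 0 ∈ interior C := hmc.zero_mem_interior hconv hint hσ
  have hstar : StarConvex ℝ 0 C := hconv.starConvex (interior_subset h0)
  have hasym : minkAsym (C ∩ s • -C) = s := hmc.minkAsym_inter_smul_neg hstar hs hsσ
  have hsym := hstar.inter_smul_neg_inter_neg hs
  refine ⟨C ∩ s • -C, hcomp.inter_right (hcomp.neg.smul s).isClosed,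
    hconv.inter (hconv.neg.smul s), ⟨0, ?_⟩, ?_, hasym, ?_⟩
  · refine interior_mono (hmc.smul_subset_inter_smul_neg hstar (by positivity) hsσ) ?_
    rw [interior_smul₀ (by positivity)]
    exact zero_mem_smul_set h0
  · rw [MinkCentered, hasym]
    exact hstar.inter_smul_neg_subset_smul_neg hs
  · have hK : C ∩ -C ⊆ convexHull ℝ ((C ∩ s • -C) ∪ -(C ∩ s • -C)) :=
      hsym ▸ inter_subset_left.trans (subset_union_left.trans (subset_convexHull ℝ _))
    rw [hsym]
    exact hopt.of_subset hK <|
      convexHull_mono (union_subset_union inter_subset_left (neg_subset_neg.2 inter_subset_left))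
end
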